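/- arXiv:2504.15729 — 12 statements merged into one kernel-verified Lean document; each statement's English description precedes it below -/
import Mathlib

section
/- If a vertex v of a finite simplicial complex K is dominated by a vertex a (i.e., the link of v in K is a simplicial cone with apex a), then the simplicial map r sending v to a and fixing all other vertices is a well-defined simplicial map from K to the subcomplex K minus v (the full subcomplex on V(K)\{v}). -/
open Finset

variable {V : Type*}

/-- A finite abstract simplicial complex: a finite family of nonempty finite sets
closed under taking nonempty subsets. -/
def IsComplex [DecidableEq V] (K : Finset (Finset V)) : Prop :=
  (∀ σ ∈ K, σ.Nonempty) ∧ ∀ σ ∈ K, ∀ τ, τ ⊆ σ → τ.Nonempty → τ ∈ K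

/-- The link of a vertex `v` in `K`. -/
def link [DecidableEq V] (K : Finset (Finset V)) (v : V) : Finset (Finset V) :=
  K.filter (fun σ => v ∉ σ ∧ insert v σ ∈ K)

/-- `v` is dominated by `a` in `K`: the link of `v` is a simplicial cone with apex `a`. -/
def Dominated [DecidableEq V] (K : Finset (Finset V)) (v a : V) : Prop :=
  a ≠ v ∧ ({a} : Finset V) ∈ link K v ∧ ∀ σ ∈ link K v, insert a σ ∈ link K v

/-- `K ∖ v`: the subcomplex of simplices not containing `v`. -/
def deleteVertex [DecidableEq V] (K : Finset (Finset V)) (v : V) : Finset (Finset V) :=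
  K.filter (fun σ => v ∉ σ)

/-- If `v` is dominated by `a` in `K`, then the vertex map sending `v` to `a` and fixing
all other vertices is a well-defined simplicial map from `K` to `K ∖ v`. -/
theorem strong_retraction_simplicial [DecidableEq V] (K : Finset (Finset V))
    (hK : IsComplex K) (v a : V) (hdom : Dominated K v a) :
    ∀ σ ∈ K, σ.image (fun w => if w = v then a else w) ∈ deleteVertex K v := by
  obtain ⟨hav, halk, hcone⟩ := hdom
  intro σ hσ
  have hvnot : ∀ τ : Finset V, v ∉ τ.image (fun w => if w = v then a else w) := by
    intro τ hv
    obtain ⟨w, _, hw⟩ := mem_image.mp hv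
    by_cases h : w = v
    · simp [h] at hw; exact hav hw
    · simp [h] at hw
  by_cases hvσ : v ∈ σ
  · -- image = insert a (σ.erase v)
    have himg : σ.image (fun w => if w = v then a else w) = insert a (σ.erase v) := by
      ext x
      simp only [mem_image, mem_insert, mem_erase]
      constructor
      · rintro ⟨w, hw, hwx⟩
        by_cases h : w = v
        · simp [h] at hwx; exact Or.inl hwx.symm
        · simp [h] at hwx; exact Or.inr ⟨hwx ▸ h, hwx ▸ hw⟩
      · rintro (rfl | ⟨hxv, hxσ⟩)
        · exact ⟨v, hvσ, by simp⟩
        · exact ⟨x, hxσ, by simp [hxv]⟩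
    rw [himg, deleteVertex, mem_filter]
    refine ⟨?_, himg ▸ hvnot σ⟩
    by_cases he : (σ.erase v).Nonempty
    · have hlk : σ.erase v ∈ link K v := by
        rw [link, mem_filter]
        refine ⟨hK.2 σ hσ _ (erase_subset _ _) he, notMem_erase _ _, ?_⟩
        rwa [insert_erase hvσ]
      have := hcone _ hlk
      rw [link, mem_filter] at this
      exact this.1
    · have : σ.erase v = ∅ := not_nonempty_iff_eq_empty.mp he
      rw [this, insert_empty_eq]
      rw [link, mem_filter] at halk
      exact halk.1
  · have : σ.image (fun w => if w = v then a else w) = σ := by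
      ext x
      simp only [mem_image]
      constructor
      · rintro ⟨w, hw, hwx⟩
        have : w ≠ v := fun h => hvσ (h ▸ hw)
        rw [if_neg this] at hwx; exact hwx ▸ hw
      · intro hx
        have : x ≠ v := fun h => hvσ (h ▸ hx)
        exact ⟨x, hx, by simp [this]⟩
    rw [this, deleteVertex, mem_filter]
    exact ⟨hσ, hvσ⟩
end

section
/- Let K be a finite simplicial complex and g : V(K) → ℝ. If the preimage g⁻¹((α,β]) contains no strong critical vertices (i.e., every vertex v with α < g(v) ≤ β is dominated in the sublevel complex K_{g(v)} by some vertex a with g(a) < g(v)), then the sublevel complex K_β strong collapses to K_α. -/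
open Finset

variable {V : Type*}

/-- Sublevel complex: full subcomplex spanned by vertices of `g`-value at most `α`. -/
noncomputable def sublevel [DecidableEq V] (K : Finset (Finset V)) (g : V → ℝ) (α : ℝ) :
    Finset (Finset V) :=
  K.filter (fun σ => ∀ w ∈ σ, g w ≤ α)

/-- `v` is descending dominated: dominated in the sublevel complex `K_{g v}`
by a vertex `a` with `g a < g v`. Otherwise `v` is strong critical. -/
def DescDom [DecidableEq V] (K : Finset (Finset V)) (g : V → ℝ) (v : V) : Prop :=
  ∃ a, g a < g v ∧ Dominated (sublevel K g (g v)) v a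

/-- Elementary strong collapse: removal of a dominated vertex with its open star. -/
def ElemSC [DecidableEq V] (K L : Finset (Finset V)) : Prop :=
  ∃ v a, ({v} : Finset V) ∈ K ∧ Dominated K v a ∧ L = deleteVertex K v

/-- Domination persists when we delete a set of vertices containing neither `v` nor `a`. -/
lemma dominated_filter_free [DecidableEq V] {M : Finset (Finset V)} {v a : V} (T : Finset V)
    (hv : v ∉ T) (ha : a ∉ T) (hd : Dominated M v a) :
    Dominated (M.filter (fun σ => ∀ u ∈ T, u ∉ σ)) v a := by
  obtain ⟨hav, hlink, hcone⟩ := hd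
  simp only [link, mem_filter] at hlink
  obtain ⟨haM, hva, hinsM⟩ := hlink
  constructor
  · exact hav
  constructor
  · simp only [link, mem_filter]
    refine ⟨⟨haM, ?_⟩, hva, hinsM, ?_⟩
    · intro u hu
      simp only [mem_singleton]
      rintro rfl; exact ha hu
    · intro u hu
      simp only [mem_insert, mem_singleton]
      rintro (rfl | rfl)
      · exact hv hu
      · exact ha hu
  · intro σ hσ
    simp only [link, mem_filter] at hσ ⊢
    obtain ⟨⟨hσM, hσT⟩, hvσ, hinsσM, hinsσT⟩ := hσ
    have hσlink : σ ∈ link M v := by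
      simp only [link, mem_filter]; exact ⟨hσM, hvσ, hinsσM⟩
    have := hcone σ hσlink
    simp only [link, mem_filter] at this
    obtain ⟨h1, h2, h3⟩ := this
    refine ⟨⟨h1, ?_⟩, h2, h3, ?_⟩
    · intro u hu
      simp only [mem_insert]
      rintro (rfl | huσ)
      · exact ha hu
      · exact hσT u hu huσ
    · intro u hu
      simp only [mem_insert]
      rintro (rfl | rfl | huσ)
      · exact hv hu
      · exact ha hu
      · exact hσT u hu huσ

/-- If `g⁻¹((α, β])` contains no strong critical vertices, then the sublevel complex
`K_β` strong collapses to `K_α`. -/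
theorem strong_collapse_of_no_critical [DecidableEq V] (K : Finset (Finset V))
    (hK : IsComplex K) (g : V → ℝ) (α β : ℝ) (hαβ : α ≤ β)
    (h : ∀ v : V, ({v} : Finset V) ∈ K → α < g v → g v ≤ β → DescDom K g v) :
    Relation.ReflTransGen (ElemSC (V := V)) (sublevel K g β) (sublevel K g α) := by
  -- the set of vertices to be removed
  set S : Finset V := (K.biUnion id).filter
      (fun u => ({u} : Finset V) ∈ K ∧ α < g u ∧ g u ≤ β) with hSdef
  have hSmem : ∀ u, u ∈ S ↔ ({u} : Finset V) ∈ K ∧ α < g u ∧ g u ≤ β := by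
    intro u
    simp only [hSdef, mem_filter, mem_biUnion, id]
    constructor
    · rintro ⟨-, hu⟩; exact hu
    · intro hu; exact ⟨⟨{u}, hu.1, mem_singleton_self u⟩, hu⟩
  -- every vertex of a simplex of K is itself a vertex of K
  have hvert : ∀ σ ∈ K, ∀ w ∈ σ, ({w} : Finset V) ∈ K := by
    intro σ hσ w hw
    exact hK.2 σ hσ {w} (singleton_subset_iff.mpr hw) (singleton_nonempty w)
  -- removing a set of vertices from K_β
  set del : Finset V → Finset (Finset V) :=
    fun T => (sublevel K g β).filter (fun σ => ∀ u ∈ T, u ∉ σ) with hdel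
  have hdelmem : ∀ T σ, σ ∈ del T ↔ σ ∈ K ∧ (∀ w ∈ σ, g w ≤ β) ∧ ∀ u ∈ T, u ∉ σ := by
    intro T σ
    simp only [hdel, sublevel, mem_filter, and_assoc]
  -- the key induction
  have key : ∀ n (T : Finset V), (S \ T).card ≤ n → T ⊆ S →
      (∀ t ∈ T, ∀ u ∈ S, u ∉ T → g u ≤ g t) →
      Relation.ReflTransGen (ElemSC (V := V)) (del T) (sublevel K g α) := by
    intro n
    induction n with
    | zero =>
      intro T hcard hTS hinv
      have hST : S ⊆ T := by
        intro u hu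
        by_contra hu'
        have : u ∈ S \ T := mem_sdiff.mpr ⟨hu, hu'⟩
        have := card_pos.mpr ⟨u, this⟩
        omega
      have hTeq : T = S := Subset.antisymm hTS hST
      subst hTeq
      have : del S = sublevel K g α := by
        ext σ
        rw [hdelmem, sublevel, mem_filter]
        constructor
        · rintro ⟨hσK, hβ, hS⟩
          refine ⟨hσK, fun w hw => ?_⟩
          by_contra hgw
          push_neg at hgw
          exact hS w ((hSmem w).mpr ⟨hvert σ hσK w hw, hgw, hβ w hw⟩) hw
        · rintro ⟨hσK, hα⟩
          refine ⟨hσK, fun w hw => (hα w hw).trans hαβ, fun u hu hoσ => ?_⟩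
          exact absurd (hα u hoσ) (not_le.mpr ((hSmem u).mp hu).2.1)
      rw [this]
    | succ n ih =>
      intro T hcard hTS hinv
      rcases eq_empty_or_nonempty (S \ T) with hE | hNE
      · -- no vertices left, same as base case
        have hST : S ⊆ T := fun u hu => by
          by_contra hu'
          exact absurd (mem_sdiff.mpr ⟨hu, hu'⟩) (by simp [hE])
        have hTeq : T = S := Subset.antisymm hTS hST
        subst hTeq
        exact ih S (by simp) hTS hinv
      · -- pick v of maximal g-value among the remaining vertices
        obtain ⟨v, hvmem, hvmax⟩ := Finset.exists_max_image (S \ T) g hNE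
        have hvS : v ∈ S := (mem_sdiff.mp hvmem).1
        have hvT : v ∉ T := (mem_sdiff.mp hvmem).2
        obtain ⟨hvK, hvα, hvβ⟩ := (hSmem v).mp hvS
        obtain ⟨a, hga, hdom⟩ := h v hvK hvα hvβ
        have haT : a ∉ T := by
          intro haT
          exact absurd (hinv a haT v hvS hvT) (not_le.mpr hga)
        -- del T is the sublevel complex at level g v with T deleted
        have hLe : del T = (sublevel K g (g v)).filter (fun σ => ∀ u ∈ T, u ∉ σ) := by
          ext σ
          rw [hdelmem]
          simp only [sublevel, mem_filter, and_assoc]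
          constructor
          · rintro ⟨hσK, hβ', hT⟩
            refine ⟨hσK, fun w hw => ?_, hT⟩
            rcases le_or_gt (g w) α with h1 | h1
            · exact h1.trans hvα.le
            · have hwS : w ∈ S := (hSmem w).mpr ⟨hvert σ hσK w hw, h1, hβ' w hw⟩
              have hwT : w ∉ T := fun hc => hT w hc hw
              exact hvmax w (mem_sdiff.mpr ⟨hwS, hwT⟩)
          · rintro ⟨hσK, hgv, hT⟩
            exact ⟨hσK, fun w hw => (hgv w hw).trans hvβ, hT⟩
        have hdomL : Dominated (del T) v a := by
          rw [hLe]
          exact dominated_filter_free T hvT haT hdom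
        have hvL : ({v} : Finset V) ∈ del T := by
          rw [hdelmem]
          refine ⟨hvK, fun w hw => ?_, fun u hu hw => ?_⟩
          · rw [mem_singleton] at hw; subst hw; exact hvβ
          · rw [mem_singleton] at hw; subst hw; exact hvT hu
        have hstep : ElemSC (del T) (del (insert v T)) := by
          refine ⟨v, a, hvL, hdomL, ?_⟩
          ext σ
          constructor
          · intro hσ
            rw [hdelmem] at hσ
            obtain ⟨h1, h2, h3⟩ := hσ
            rw [deleteVertex, mem_filter, hdelmem]
            exact ⟨⟨h1, h2, fun u hu => h3 u (mem_insert_of_mem hu)⟩, h3 v (mem_insert_self v T)⟩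
          · intro hσ
            rw [deleteVertex, mem_filter, hdelmem] at hσ
            obtain ⟨⟨h1, h2, h3⟩, h4⟩ := hσ
            rw [hdelmem]
            refine ⟨h1, h2, fun u hu => ?_⟩
            rcases mem_insert.mp hu with rfl | hu
            · exact h4
            · exact h3 u hu
        refine Relation.ReflTransGen.head hstep ?_
        apply ih (insert v T)
        · have h1 : S \ insert v T = (S \ T).erase v := by
            ext u
            simp only [mem_sdiff, mem_erase, mem_insert, not_or]
            tauto
          rw [h1, card_erase_of_mem hvmem]
          omega
        · exact insert_subset hvS hTS
        · intro t ht u huS huT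
          rw [mem_insert] at ht
          have huT' : u ∉ T := fun hc => huT (mem_insert_of_mem hc)
          rcases ht with rfl | ht
          · exact hvmax u (mem_sdiff.mpr ⟨huS, huT'⟩)
          · exact hinv t ht u huS huT'
  have h0 : del ∅ = sublevel K g β := by
    ext σ
    rw [hdelmem]
    simp [sublevel, mem_filter, and_assoc]
  have := key (S \ ∅).card ∅ le_rfl (empty_subset S) (by simp)
  rwa [h0] at this
end

section
/- Let K be a finite simplicial complex and g : V(K) → ℝ. For each simplex σ containing at least one descending dominated vertex, let v_σ be the descending dominated vertex of σ maximizing g, and let a_σ be a fixed dominating vertex for v_σ with g(a_σ) < g(v_σ). Define M to be the set of pairs {σ∖{a_σ}, σ} when a_σ ∈ σ, and {σ, σ∪{a_σ}} when a_σ ∉ σ. Then M is a matching on the simplices of K: no simplex occurs in more than one pair of M. -/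
open Finset

variable {V : Type*}

/-- The matched partner construction: pair `σ` with `σ ∖ {a_σ}` if `a_σ ∈ σ`, and with
`σ ∪ {a_σ}` otherwise, where `a_σ` dominates the `g`-maximal descending dominated
vertex `v_σ = vmax σ` of `σ`. -/
def pairOf [DecidableEq V] (av : V → V) (vmax : Finset V → V) (σ : Finset V) :
    Finset V × Finset V :=
  if av (vmax σ) ∈ σ then (σ.erase (av (vmax σ)), σ) else (σ, insert (av (vmax σ)) σ)

/-- The set `M` of matched pairs: one pair for each simplex of `K` containing a
descending dominated vertex. -/
def matchingOf [DecidableEq V] (K : Finset (Finset V)) (g : V → ℝ)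
    (av : V → V) (vmax : Finset V → V) : Set (Finset V × Finset V) :=
  {p | ∃ σ ∈ K, (∃ v ∈ σ, DescDom K g v) ∧ p = pairOf av vmax σ}


lemma pairOf_facts [DecidableEq V] {K : Finset (Finset V)} {g : V → ℝ}
    {av : V → V}
    (hav : ∀ v, DescDom K g v → g (av v) < g v ∧ Dominated (sublevel K g (g v)) v (av v))
    {vmax : Finset V → V}
    (hvmax : ∀ σ ∈ K, (∃ v ∈ σ, DescDom K g v) →
      vmax σ ∈ σ ∧ DescDom K g (vmax σ) ∧ ∀ w ∈ σ, DescDom K g w → g w ≤ g (vmax σ))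
    {σ : Finset V} (hσ : σ ∈ K) (hex : ∃ v ∈ σ, DescDom K g v) :
    av (vmax σ) ∉ (pairOf av vmax σ).1 ∧
    (pairOf av vmax σ).2 = insert (av (vmax σ)) (pairOf av vmax σ).1 ∧
    vmax σ ∈ (pairOf av vmax σ).1 ∧ DescDom K g (vmax σ) ∧
    ∀ u ∈ (pairOf av vmax σ).2, DescDom K g u → g u ≤ g (vmax σ) := by
  obtain ⟨hv, hvd, hmax⟩ := hvmax σ hσ hex
  have ha := (hav _ hvd).1
  have hane : av (vmax σ) ≠ vmax σ := by
    intro h; rw [h] at ha; exact lt_irrefl _ ha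
  unfold pairOf
  by_cases h : av (vmax σ) ∈ σ
  · simp only [h, if_true]
    refine ⟨Finset.notMem_erase _ _, (Finset.insert_erase h).symm,
      Finset.mem_erase.2 ⟨hane.symm, hv⟩, hvd, ?_⟩
    exact fun u hu hud => hmax u hu hud
  · rw [if_neg h]
    refine ⟨h, rfl, hv, hvd, ?_⟩
    intro u hu hud
    rcases Finset.mem_insert.1 hu with h1 | h1
    · exact h1 ▸ le_of_lt ha
    · exact hmax u h1 hud

/-- `M` is a matching on the simplices of `K`: no simplex occurs in more than one pair. -/
theorem matchingOf_is_matching [DecidableEq V] (K : Finset (Finset V))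
    (hK : IsComplex K) (g : V → ℝ) (hg : Function.Injective g)
    (av : V → V)
    (hav : ∀ v, DescDom K g v → g (av v) < g v ∧ Dominated (sublevel K g (g v)) v (av v))
    (vmax : Finset V → V)
    (hvmax : ∀ σ ∈ K, (∃ v ∈ σ, DescDom K g v) →
      vmax σ ∈ σ ∧ DescDom K g (vmax σ) ∧ ∀ w ∈ σ, DescDom K g w → g w ≤ g (vmax σ)) :
    ∀ p ∈ matchingOf K g av vmax, ∀ q ∈ matchingOf K g av vmax,
      (p.1 = q.1 ∨ p.1 = q.2 ∨ p.2 = q.1 ∨ p.2 = q.2) → p = q := by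
  intro p hp q hq hcase
  obtain ⟨σ, hσ, hexσ, hpσ⟩ := hp
  obtain ⟨τ, hτ, hexτ, hqτ⟩ := hq
  obtain ⟨ha1, ha2, ha3, ha4, ha5⟩ := pairOf_facts hav hvmax hσ hexσ
  obtain ⟨hb1, hb2, hb3, hb4, hb5⟩ := pairOf_facts hav hvmax hτ hexτ
  subst hpσ hqτ
  set v := vmax σ with hvdef
  set w := vmax τ with hwdef
  set a := av v with hadef
  set b := av w with hbdef
  set A := (pairOf av vmax σ).1 with hA
  set C := (pairOf av vmax τ).1 with hC
  -- key: from any coincidence, g v = g w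
  have key : ∀ _ : (A = C ∨ A = insert b C ∨ insert a A = C ∨ insert a A = insert b C),
      v = w := by
    intro h
    have hvw : g v ≤ g w := by
      apply hb5 v _ ha4
      rw [hb2]
      rcases h with h | h | h | h
      · rw [← h]; exact Finset.mem_insert_of_mem ha3
      · rw [← h]; exact ha3
      · rw [← h]; exact Finset.mem_insert_of_mem (Finset.mem_insert_of_mem ha3)
      · rw [← h]; exact Finset.mem_insert_of_mem ha3
    have hwv : g w ≤ g v := by
      apply ha5 w _ hb4
      rw [ha2]
      rcases h with h | h | h | h
      · rw [h]; exact Finset.mem_insert_of_mem hb3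
      · rw [h]; exact Finset.mem_insert_of_mem (Finset.mem_insert_of_mem hb3)
      · rw [h]; exact hb3
      · rw [h]; exact Finset.mem_insert_of_mem hb3
    exact hg (le_antisymm hvw hwv)
  rw [ha2, hb2] at hcase
  rcases hcase with h | h | h | h
  · have hvw := key (Or.inl h)
    have hab : a = b := by rw [hadef, hbdef, hvw]
    exact Prod.ext h (by rw [ha2, hb2, h, hab])
  · -- A = insert b C : contradiction
    exfalso
    have hvw := key (Or.inr (Or.inl h))
    have hab : a = b := by rw [hadef, hbdef, hvw]
    apply ha1
    rw [h, hab]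
    exact Finset.mem_insert_self _ _
  · exfalso
    have hvw := key (Or.inr (Or.inr (Or.inl h)))
    have hab : a = b := by rw [hadef, hbdef, hvw]
    apply hb1
    rw [← h, ← hab]
    exact Finset.mem_insert_self _ _
  · have hvw := key (Or.inr (Or.inr (Or.inr h)))
    have hab : a = b := by rw [hadef, hbdef, hvw]
    have hAC : A = C := by
      have : (insert a A).erase a = (insert b C).erase b := by rw [h, hab]
      rwa [Finset.erase_insert ha1, Finset.erase_insert hb1] at this
    exact Prod.ext hAC (by rw [ha2, hb2, hAC, hab])
end

section
/- Let K be a finite simplicial complex and g : V(K) → ℝ (with the matching M defined from descending dominated vertices as in the construction). Then every simplex of K whose vertices are all strong critical is unmatched by M, and conversely every unmatched simplex lies in the descending open star of a strong critical vertex. In particular, the unmatched (critical) simplices of M are exactly the simplices belonging to st↓(w,K) for some strong critical vertex w, where w is the vertex of maximal g-value of the simplex. -/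
open Finset

variable {V : Type*}

/-- Every simplex all of whose vertices are strong critical is unmatched by `M`, and
conversely every unmatched simplex lies in the descending open star of a strong
critical vertex, namely the vertex of maximal `g`-value of the simplex. -/
theorem unmatched_iff_descending_star [DecidableEq V] (K : Finset (Finset V))
    (hK : IsComplex K) (g : V → ℝ) (hg : Function.Injective g)
    (av : V → V)
    (hav : ∀ v, DescDom K g v → g (av v) < g v ∧ Dominated (sublevel K g (g v)) v (av v))
    (vmax : Finset V → V)
    (hvmax : ∀ σ ∈ K, (∃ v ∈ σ, DescDom K g v) →
      vmax σ ∈ σ ∧ DescDom K g (vmax σ) ∧ ∀ w ∈ σ, DescDom K g w → g w ≤ g (vmax σ)) :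
    (∀ σ ∈ K, (∀ v ∈ σ, ¬ DescDom K g v) →
      ∀ p ∈ matchingOf K g av vmax, σ ≠ p.1 ∧ σ ≠ p.2) ∧
    (∀ σ ∈ K, (∀ p ∈ matchingOf K g av vmax, σ ≠ p.1 ∧ σ ≠ p.2) →
      ∃ w ∈ σ, ¬ DescDom K g w ∧ (∀ u ∈ σ, g u ≤ g w) ∧
        w ∈ σ ∧ σ ∈ sublevel K g (g w)) := by
  constructor
  · rintro σ hσ hcrit p ⟨τ, hτK, hτd, rfl⟩
    obtain ⟨hm, hdd, -⟩ := hvmax τ hτK hτd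
    have hne : av (vmax τ) ≠ vmax τ := by
      intro h
      have := (hav _ hdd).1
      rw [h] at this; exact lt_irrefl _ this
    have key : ∀ s : Finset V, vmax τ ∈ s → σ ≠ s := by
      intro s hs h
      exact hcrit _ (h ▸ hs) hdd
    unfold pairOf
    split
    · exact ⟨key _ (Finset.mem_erase.mpr ⟨hne.symm, hm⟩), key _ hm⟩
    · exact ⟨key _ hm, key _ (Finset.mem_insert_of_mem hm)⟩
  · intro σ hσ hun
    have hcrit : ∀ v ∈ σ, ¬ DescDom K g v := by
      intro v hv hvd
      obtain ⟨h1, h2⟩ := hun _ ⟨σ, hσ, ⟨v, hv, hvd⟩, rfl⟩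
      by_cases h : av (vmax σ) ∈ σ <;> simp [pairOf, h] at h1 h2
    obtain ⟨w, hw, hwmax⟩ := σ.exists_max_image g (hK.1 σ hσ)
    exact ⟨w, hw, hcrit w hw, hwmax, hw, Finset.mem_filter.mpr ⟨hσ, hwmax⟩⟩
end

section
/- If K strong collapses to a subcomplex L via a sequence of elementary strong collapses removing vertices v_1,…,v_n in order, then the function g : V(K) → ℝ defined by g(v_i) = i and g(v) = 0 for v ∈ V(L) has the property that the strong critical vertices of g are exactly the vertices of L, and each v_i is descending dominated. -/
open Finset

variable {V : Type*}

/-- If `K` strong collapses to `L` removing the vertices `vs 0, …, vs (n-1)` (where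
`Ks (i+1)` collapses to `Ks i` by removing `vs i`, with `Ks n = K` and `Ks 0 = L`),
then for the function `g` with `g (vs i) = i + 1` and `g = 0` on the vertices of `L`,
every `vs i` is descending dominated and the strong critical vertices of `g` are
exactly the vertices of `L`. -/
theorem strong_collapse_gives_vertex_function [DecidableEq V]
    (K L : Finset (Finset V)) (hK : IsComplex K)
    (n : ℕ) (vs : Fin n → V) (hinj : Function.Injective vs)
    (Ks : Fin (n + 1) → Finset (Finset V))
    (hKn : Ks (Fin.last n) = K) (hK0 : Ks 0 = L)
    (hstep : ∀ i : Fin n, ∃ a, Dominated (Ks i.succ) (vs i) a ∧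
      Ks i.castSucc = deleteVertex (Ks i.succ) (vs i))
    (g : V → ℝ)
    (hg1 : ∀ i : Fin n, g (vs i) = (i : ℕ) + 1)
    (hg0 : ∀ v : V, ({v} : Finset V) ∈ L → g v = 0)
    (hvs : ∀ i : Fin n, ({vs i} : Finset V) ∉ L)
    (hvert : ∀ v : V, ({v} : Finset V) ∈ K → (({v} : Finset V) ∈ L ∨ ∃ i, vs i = v)) :
    (∀ i : Fin n, DescDom K g (vs i)) ∧
    (∀ v : V, ({v} : Finset V) ∈ K → (¬ DescDom K g v ↔ ({v} : Finset V) ∈ L)) := by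
  classical
  -- characterization of the intermediate complexes
  have hKs : ∀ j : Fin (n + 1), Ks j =
      K.filter (fun σ => ∀ k : Fin n, (j : ℕ) ≤ (k : ℕ) → vs k ∉ σ) := by
    intro j
    induction j using Fin.reverseInduction with
    | last =>
      rw [hKn]
      symm
      apply Finset.filter_true_of_mem
      intro σ _ k hk
      have := k.is_lt
      simp only [Fin.val_last] at hk
      omega
    | cast i ih =>
      obtain ⟨a, _, hdel⟩ := hstep i
      rw [hdel, ih, deleteVertex, Finset.filter_filter]
      apply Finset.filter_congr
      intro σ _
      simp only [Fin.val_succ, Fin.coe_castSucc, eq_iff_iff]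
      constructor
      · rintro ⟨h1, h2⟩ k hk
        rcases eq_or_lt_of_le hk with heq | hlt
        · have : k = i := Fin.ext heq.symm
          rw [this]; exact h2
        · exact h1 k (by omega)
      · intro h
        exact ⟨fun k hk => h k (by omega), h i le_rfl⟩
  have hvertK : ∀ σ ∈ K, ∀ w ∈ σ, ({w} : Finset V) ∈ K := by
    intro σ hσ w hw
    exact hK.2 σ hσ {w} (by simpa using hw) ⟨w, Finset.mem_singleton_self w⟩
  -- sublevel complexes coincide with the intermediate complexes
  have hsub : ∀ i : Fin n, sublevel K g ((i : ℕ) + 1) = Ks i.succ := by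
    intro i
    rw [hKs, sublevel]
    apply Finset.filter_congr
    intro σ hσ
    simp only [Fin.val_succ, eq_iff_iff]
    constructor
    · intro h k hk hkσ
      have h1 := h (vs k) hkσ
      rw [hg1 k] at h1
      have h2 : (k : ℕ) + 1 ≤ (i : ℕ) + 1 := by exact_mod_cast h1
      omega
    · intro h w hw
      rcases hvert w (hvertK σ hσ w hw) with hL | ⟨k, rfl⟩
      · rw [hg0 w hL]; positivity
      · rw [hg1 k]
        have hk : (k : ℕ) + 1 ≤ (i : ℕ) + 1 := by
          by_contra hc
          exact h k (by omega) hw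
        exact_mod_cast hk
  have part1 : ∀ i : Fin n, DescDom K g (vs i) := by
    intro i
    obtain ⟨a, hdom, _⟩ := hstep i
    obtain ⟨hane, hamem, hcone⟩ := hdom
    rw [link, Finset.mem_filter] at hamem
    have haK := hamem.1
    rw [hKs, Finset.mem_filter] at haK
    refine ⟨a, ?_, ?_⟩
    · rcases hvert a haK.1 with hL | ⟨k, rfl⟩
      · rw [hg0 a hL, hg1 i]; positivity
      · rw [hg1 k, hg1 i]
        have hki : (k : ℕ) < (i : ℕ) := by
          by_contra hc
          push_neg at hc
          rcases eq_or_lt_of_le hc with heq | hlt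
          · exact hane (congrArg vs (Fin.ext heq.symm))
          · exact haK.2 k (by simpa [Fin.val_succ] using hlt)
              (Finset.mem_singleton_self _)
        have : (k : ℕ) + 1 < (i : ℕ) + 1 := by omega
        exact_mod_cast this
    · rw [hg1 i, hsub i]
      exact ⟨hane, by rw [link, Finset.mem_filter]; exact hamem, hcone⟩
  have hnonneg : ∀ a, ({a} : Finset V) ∈ K → 0 ≤ g a := by
    intro a ha
    rcases hvert a ha with hL | ⟨k, rfl⟩
    · rw [hg0 a hL]
    · rw [hg1 k]; positivity
  refine ⟨part1, fun v hv => ⟨?_, ?_⟩⟩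
  · intro hnd
    rcases hvert v hv with hL | ⟨i, rfl⟩
    · exact hL
    · exact absurd (part1 i) hnd
  · intro hL hd
    obtain ⟨a, hga, _, hamem, _⟩ := hd
    rw [link, Finset.mem_filter] at hamem
    have haK : ({a} : Finset V) ∈ K := by
      have := hamem.1
      rw [sublevel, Finset.mem_filter] at this
      exact this.1
    have := hnonneg a haK
    rw [hg0 v hL] at hga
    linarith
end

section
/- If K and L are simplicial complexes and there is an elementary collapse from K to L (removing a free pair (σ,τ)), then the geometric realizations of K and L are homotopy equivalent; more specifically, |L| is a strong deformation retract of |K|. -/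
set_option linter.unusedSectionVars false
set_option maxHeartbeats 1000000


open Finset

variable {V : Type*}

/-- Elementary (Whitehead) collapse: removal of a free pair `(σ, τ)`, where `τ` is
the unique simplex of `K` properly containing `σ`. -/
def ElemCollapse [DecidableEq V] (K L : Finset (Finset V)) : Prop :=
  ∃ σ τ : Finset V, σ ∈ K ∧ τ ∈ K ∧ σ ⊂ τ ∧ (∀ ρ ∈ K, σ ⊂ ρ → ρ = τ) ∧
    L = (K.erase σ).erase τ

/-- Geometric realization of `K` inside `V → ℝ`: convex combinations of vertices
supported on a simplex of `K`. -/
def realization [Fintype V] [DecidableEq V] (K : Finset (Finset V)) : Set (V → ℝ) :=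
  {f | (∀ v, 0 ≤ f v) ∧ (∑ v, f v) = 1 ∧
    (Finset.univ.filter (fun v => f v ≠ 0)) ∈ K}

/-- `A` is a strong deformation retract of `X`. -/
def IsStrongDefRetract {X : Type*} [TopologicalSpace X] (A : Set X) : Prop :=
  ∃ r : C(X, X), (∀ x, r x ∈ A) ∧ Nonempty ((ContinuousMap.id X).HomotopyRel r A)

section CollapseAux
variable [Fintype V] [DecidableEq V]

/-- support of a point -/
noncomputable def supp (x : V → ℝ) : Finset V := Finset.univ.filter (fun v => x v ≠ 0)

/-- the comparison function -/
noncomputable def gfun (σ : Finset V) (x : V → ℝ) (v : V) : ℝ :=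
  (2 / (σ.card : ℝ)) / max ((2 / (σ.card : ℝ)) - x v) (1 / (σ.card : ℝ))

/-- the scaling factor -/
noncomputable def tfun (σ : Finset V) (x : V → ℝ) : ℝ :=
  if hσ : σ.Nonempty then σ.inf' hσ (gfun σ x) else 1

/-- the projection center -/
noncomputable def pfun (σ : Finset V) (a : V) : V → ℝ := fun v =>
  (if v ∈ σ then 2 / (σ.card : ℝ) else 0) + (if v = a then -1 else 0)

/-- the retraction -/
noncomputable def Ffun (σ : Finset V) (a : V) (x : V → ℝ) : V → ℝ :=
  fun v => pfun σ a v + tfun σ x * (x v - pfun σ a v)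

variable {σ : Finset V} {a : V}

lemma ncard_pos (hσ : σ.Nonempty) : 0 < (σ.card : ℝ) := by
  exact_mod_cast (Finset.card_pos).2 hσ

lemma one_le_gfun (hσ : σ.Nonempty) {x : V → ℝ} {v : V} (hx : 0 ≤ x v) :
    1 ≤ gfun σ x v := by
  have hn := ncard_pos hσ
  have hden : (0:ℝ) < max ((2 / (σ.card : ℝ)) - x v) (1 / (σ.card : ℝ)) :=
    lt_max_of_lt_right (by positivity)
  rw [gfun, le_div_iff₀ hden, one_mul]
  apply max_le (by linarith) (by rw [div_le_div_iff₀ hn hn]; linarith)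

lemma gfun_le_two (hσ : σ.Nonempty) (x : V → ℝ) (v : V) : gfun σ x v ≤ 2 := by
  have hn := ncard_pos hσ
  have hden : (0:ℝ) < (1 / (σ.card : ℝ)) := by positivity
  calc gfun σ x v ≤ (2 / (σ.card : ℝ)) / (1 / (σ.card : ℝ)) := by
        apply div_le_div_of_nonneg_left (by positivity) hden (le_max_right _ _)
      _ = 2 := by field_simp

lemma tfun_eq (hσ : σ.Nonempty) (x : V → ℝ) : tfun σ x = σ.inf' hσ (gfun σ x) := by
  rw [tfun, dif_pos hσ]

lemma one_le_tfun (hσ : σ.Nonempty) {x : V → ℝ} (hx : ∀ v, 0 ≤ x v) : 1 ≤ tfun σ x := by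
  rw [tfun_eq hσ]
  exact Finset.le_inf' hσ _ (fun v _ => one_le_gfun hσ (hx v))

lemma tfun_le_gfun (hσ : σ.Nonempty) (x : V → ℝ) {v : V} (hv : v ∈ σ) :
    tfun σ x ≤ gfun σ x v := by
  rw [tfun_eq hσ]; exact Finset.inf'_le _ hv

lemma gfun_eq_one (hσ : σ.Nonempty) {x : V → ℝ} {v : V} (hx : x v = 0) :
    gfun σ x v = 1 := by
  have hn := ncard_pos hσ
  rw [gfun, hx, sub_zero, max_eq_left (by rw [div_le_div_iff₀ hn hn]; linarith)]
  field_simp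

lemma tfun_eq_one (hσ : σ.Nonempty) {x : V → ℝ} (hx : ∀ v, 0 ≤ x v)
    {v : V} (hv : v ∈ σ) (hxv : x v = 0) : tfun σ x = 1 := by
  refine le_antisymm ?_ (one_le_tfun hσ hx)
  calc tfun σ x ≤ gfun σ x v := tfun_le_gfun hσ x hv
    _ = 1 := gfun_eq_one hσ hxv

lemma Ffun_eq_self {x : V → ℝ} (ht : tfun σ x = 1) : Ffun σ a x = x := by
  funext v; rw [Ffun, ht]; ring

lemma tfun_continuous (σ : Finset V) : Continuous (tfun σ) := by
  by_cases hσ : σ.Nonempty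
  · have : tfun σ = fun x => σ.inf' hσ (fun v => gfun σ x v) := by
      funext x; rw [tfun_eq hσ]
    rw [this]
    have hn := ncard_pos hσ
    apply Continuous.finset_inf'_apply (f := fun v x => gfun σ x v) hσ
    intro v _
    apply Continuous.div continuous_const
    · exact ((continuous_const.sub (continuous_apply v)).max continuous_const)
    · intro x
      have : (0:ℝ) < max ((2 / (σ.card : ℝ)) - x v) (1 / (σ.card : ℝ)) :=
        lt_max_of_lt_right (by positivity)
      exact ne_of_gt this
  · have : tfun σ = fun _ => 1 := by funext x; rw [tfun, dif_neg hσ]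
    rw [this]; exact continuous_const

lemma Ffun_continuous (σ : Finset V) (a : V) : Continuous (Ffun σ a) := by
  apply continuous_pi
  intro v
  exact continuous_const.add ((tfun_continuous σ).mul ((continuous_apply v).sub continuous_const))

lemma sum_pfun (hσ : σ.Nonempty) (ha : a ∉ σ) : ∑ v, pfun σ a v = 1 := by
  have hn := ncard_pos hσ
  simp only [pfun]
  rw [Finset.sum_add_distrib]
  rw [Finset.sum_ite_mem, Finset.univ_inter, Finset.sum_const, Finset.sum_ite_eq' Finset.univ a]
  simp only [Finset.mem_univ, if_true, nsmul_eq_mul]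
  field_simp
  norm_num

lemma Ffun_geom (hσ : σ.Nonempty) (ha : a ∉ σ) {x : V → ℝ}
    (hx0 : ∀ v, 0 ≤ x v) (hx1 : ∑ v, x v = 1)
    (hout : ∀ v, v ∉ insert a σ → x v = 0) :
    (∀ v, 0 ≤ Ffun σ a x v) ∧ (∑ v, Ffun σ a x v = 1) ∧
    (∃ v ∈ σ, Ffun σ a x v = 0) ∧ (∀ v, v ∉ insert a σ → Ffun σ a x v = 0) := by
  have hn := ncard_pos hσ
  set n : ℝ := (σ.card : ℝ) with hn_def
  have hinv : (0:ℝ) < 1 / n := by positivity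
  have ht1 : 1 ≤ tfun σ x := one_le_tfun hσ hx0
  have hpa : pfun σ a a = -1 := by rw [pfun, if_neg ha, if_pos rfl]; ring
  have hpσ : ∀ v ∈ σ, pfun σ a v = 2 / n := by
    intro v hv
    have : v ≠ a := fun h => ha (h ▸ hv)
    rw [pfun, if_pos hv, if_neg this]; ring
  have hpout : ∀ v, v ∉ insert a σ → pfun σ a v = 0 := by
    intro v hv
    rw [Finset.mem_insert] at hv; push_neg at hv
    rw [pfun, if_neg hv.2, if_neg hv.1]; ring
  have houtF : ∀ v, v ∉ insert a σ → Ffun σ a x v = 0 := by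
    intro v hv
    rw [Ffun, hpout v hv, hout v hv]; ring
  refine ⟨?_, ?_, ?_, houtF⟩
  · -- nonnegativity
    intro v
    by_cases hv : v ∈ σ
    · rw [Ffun, hpσ v hv]
      by_cases hc : 2 / n - x v ≤ 0
      · have h2n : (0:ℝ) < 2/n := by positivity
        linarith [mul_nonneg (by linarith : (0:ℝ) ≤ tfun σ x)
          (by linarith : (0:ℝ) ≤ x v - 2/n)]
      · push_neg at hc
        have hle : tfun σ x ≤ (2/n) / (2/n - x v) := by
          calc tfun σ x ≤ gfun σ x v := tfun_le_gfun hσ x hv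
            _ ≤ (2/n) / (2/n - x v) :=
              div_le_div_of_nonneg_left (by positivity) hc (le_max_left _ _)
        have := (le_div_iff₀ hc).mp hle
        linarith
    · by_cases hva : v = a
      · rw [Ffun, hva, hpa]
        nlinarith [mul_nonneg (by linarith : (0:ℝ) ≤ tfun σ x) (hx0 a), ht1, hx0 a]
      · have hvout : v ∉ insert a σ := by
          rw [Finset.mem_insert]; push_neg; exact ⟨hva, hv⟩
        rw [houtF v hvout]
  · -- sum is one
    calc ∑ v, Ffun σ a x v
        = ∑ v, pfun σ a v + tfun σ x * (∑ v, x v - ∑ v, pfun σ a v) := by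
          simp only [Ffun]
          rw [Finset.sum_add_distrib, ← Finset.mul_sum, Finset.sum_sub_distrib]
      _ = 1 := by rw [sum_pfun hσ ha, hx1]; ring
  · -- a vanishing coordinate in σ
    obtain ⟨v₁, hv₁, hmin⟩ := Finset.exists_mem_eq_inf' hσ (gfun σ x)
    have htv : tfun σ x = gfun σ x v₁ := by rw [tfun_eq hσ, hmin]
    by_cases hcase : 1 / n ≤ 2 / n - x v₁
    · refine ⟨v₁, hv₁, ?_⟩
      have hpos : 0 < 2 / n - x v₁ := lt_of_lt_of_le hinv hcase
      rw [Ffun, hpσ v₁ hv₁, htv, gfun, max_eq_left hcase]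
      have hd : 2 / n - x v₁ ≠ 0 := ne_of_gt hpos
      rw [show x v₁ - 2/n = -(2/n - x v₁) by ring, mul_neg, div_mul_cancel₀ _ hd]
      ring
    · exfalso
      push_neg at hcase
      have hxv₁ : 1 / n < x v₁ := by
        have : (2:ℝ)/n = 1/n + 1/n := by ring
        linarith
      have ht2 : tfun σ x = 2 := by
        rw [htv, gfun, max_eq_right (le_of_lt hcase)]
        field_simp
        exact hn_def
      have hall : ∀ v ∈ σ, 1 / n ≤ x v := by
        intro v hv
        have h2 : (2:ℝ) ≤ gfun σ x v := ht2 ▸ tfun_le_gfun hσ x hv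
        have hmaxpos : (0:ℝ) < max (2/n - x v) (1/n) := lt_max_of_lt_right hinv
        rw [gfun, le_div_iff₀ hmaxpos] at h2
        have hle : 2/n - x v ≤ max (2/n - x v) (1/n) := le_max_left _ _
        have h2n : (2:ℝ)/n = 2*(1/n) := by ring
        linarith
      have hsum : ∑ v ∈ σ, x v ≤ 1 := hx1 ▸ Finset.sum_le_univ_sum_of_nonneg hx0
      have hconst : ∑ _v ∈ σ, (1/n : ℝ) = 1 := by
        rw [Finset.sum_const, nsmul_eq_mul]; field_simp
        exact hn_def.symm
      have hzero : ∑ v ∈ σ, (x v - 1/n) = 0 := by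
        have h1 : ∑ v ∈ σ, (x v - 1/n) ≤ 0 := by
          rw [Finset.sum_sub_distrib, hconst]; linarith
        have h2 : 0 ≤ ∑ v ∈ σ, (x v - 1/n) :=
          Finset.sum_nonneg (fun v hv => by linarith [hall v hv])
        linarith
      have := (Finset.sum_eq_zero_iff_of_nonneg
        (fun v hv => by linarith [hall v hv] : ∀ v ∈ σ, 0 ≤ x v - 1/n)).mp hzero v₁ hv₁
      linarith

variable {K L : Finset (Finset V)}

lemma mem_supp {x : V → ℝ} {v : V} : v ∈ supp x ↔ x v ≠ 0 := by
  simp [supp]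

lemma realization_def {x : V → ℝ} :
    x ∈ realization K ↔ (∀ v, 0 ≤ x v) ∧ (∑ v, x v) = 1 ∧ supp x ∈ K := Iff.rfl

lemma supp_nonempty {x : V → ℝ} (hx1 : ∑ v, x v = 1) : (supp x).Nonempty := by
  rw [Finset.nonempty_iff_ne_empty]
  intro h
  have hz : ∀ v, x v = 0 := by
    intro v
    by_contra hv
    have : v ∈ supp x := mem_supp.mpr hv
    simp [h] at this
  rw [Finset.sum_congr rfl (fun v _ => hz v)] at hx1
  simp at hx1

lemma supp_subset_of_vanish {x : V → ℝ} {s : Finset V} (h : ∀ v, v ∉ s → x v = 0) :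
    supp x ⊆ s := fun v hv => by
  by_contra hvs; exact (mem_supp.mp hv) (h v hvs)

lemma elem_structure (hK : IsComplex K) (h : ElemCollapse K L) :
    ∃ σ : Finset V, ∃ a : V, σ ∈ K ∧ a ∉ σ ∧ σ.Nonempty ∧ insert a σ ∈ K ∧
      (∀ ρ ∈ K, σ ⊂ ρ → ρ = insert a σ) ∧ L = (K.erase σ).erase (insert a σ) := by
  obtain ⟨σ, τ, hσK, hτK, hst, hfree, hL⟩ := h
  obtain ⟨a, ha⟩ := Finset.exists_of_ssubset hst
  have hins : insert a σ ∈ K :=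
    hK.2 τ hτK _ (Finset.insert_subset ha.1 hst.subset) (Finset.insert_nonempty a σ)
  have hτ : τ = insert a σ := (hfree _ hins (Finset.ssubset_insert ha.2)).symm
  exact ⟨σ, a, hσK, ha.2, hK.1 σ hσK, hτ ▸ hτK, hτ ▸ hfree, hτ ▸ hL⟩

lemma supp_eq_of_pos (hσK : σ ∈ K) (ha : a ∉ σ)
    (hfree : ∀ ρ ∈ K, σ ⊂ ρ → ρ = insert a σ) {x : V → ℝ}
    (hx : x ∈ realization K) (hpos : ∀ v ∈ σ, x v ≠ 0) :
    ∀ v, v ∉ insert a σ → x v = 0 := by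
  have hsub : σ ⊆ supp x := fun v hv => mem_supp.mpr (hpos v hv)
  have hcases : supp x = σ ∨ supp x = insert a σ := by
    by_cases h : supp x = σ
    · exact Or.inl h
    · exact Or.inr (hfree _ hx.2.2 (hsub.ssubset_of_ne (fun hh => h hh.symm)))
  intro v hv
  by_contra hxv
  have hvs : v ∈ supp x := mem_supp.mpr hxv
  rcases hcases with h | h
  · exact hv (Finset.mem_insert_of_mem (h ▸ hvs))
  · exact hv (h ▸ hvs)

lemma Ffun_mem (hK : IsComplex K) (hσK : σ ∈ K) (ha : a ∉ σ) (hτK : insert a σ ∈ K)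
    (hfree : ∀ ρ ∈ K, σ ⊂ ρ → ρ = insert a σ) {x : V → ℝ} (hx : x ∈ realization K) :
    Ffun σ a x ∈ realization K ∧ supp (Ffun σ a x) ≠ σ ∧
      supp (Ffun σ a x) ≠ insert a σ := by
  have hσ : σ.Nonempty := hK.1 σ hσK
  by_cases hzero : ∃ v ∈ σ, x v = 0
  · obtain ⟨v, hv, hxv⟩ := hzero
    rw [Ffun_eq_self (tfun_eq_one hσ hx.1 hv hxv)]
    have hvns : v ∉ supp x := by simp [mem_supp, hxv]
    refine ⟨hx, fun h => hvns ?_, fun h => hvns ?_⟩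
    · rw [h]; exact hv
    · rw [h]; exact Finset.mem_insert_of_mem hv
  · push_neg at hzero
    have hout := supp_eq_of_pos hσK ha hfree hx hzero
    obtain ⟨hF0, hF1, ⟨v₁, hv₁, hFv₁⟩, hFout⟩ := Ffun_geom hσ ha hx.1 hx.2.1 hout
    have hsupp : supp (Ffun σ a x) ⊆ insert a σ := supp_subset_of_vanish hFout
    have hv₁ns : v₁ ∉ supp (Ffun σ a x) := by simp [mem_supp, hFv₁]
    refine ⟨⟨hF0, hF1, hK.2 _ hτK _ hsupp (supp_nonempty hF1)⟩,
      fun h => hv₁ns ?_, fun h => hv₁ns ?_⟩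
    · rw [h]; exact hv₁
    · rw [h]; exact Finset.mem_insert_of_mem hv₁

lemma seg_mem (hK : IsComplex K) (hσK : σ ∈ K) (ha : a ∉ σ) (hτK : insert a σ ∈ K)
    (hfree : ∀ ρ ∈ K, σ ⊂ ρ → ρ = insert a σ) {x : V → ℝ} (hx : x ∈ realization K)
    {s : ℝ} (hs0 : 0 ≤ s) (hs1 : s ≤ 1) :
    (fun v => (1 - s) * x v + s * Ffun σ a x v) ∈ realization K := by
  have hσ : σ.Nonempty := hK.1 σ hσK
  have hF := (Ffun_mem hK hσK ha hτK hfree hx).1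
  refine ⟨?_, ?_, ?_⟩
  · intro v
    exact add_nonneg (mul_nonneg (by linarith) (hx.1 v)) (mul_nonneg hs0 (hF.1 v))
  · rw [Finset.sum_add_distrib, ← Finset.mul_sum, ← Finset.mul_sum, hx.2.1, hF.2.1]
    ring
  · by_cases hzero : ∃ v ∈ σ, x v = 0
    · obtain ⟨v, hv, hxv⟩ := hzero
      have hFf : Ffun σ a x = x := Ffun_eq_self (tfun_eq_one hσ hx.1 hv hxv)
      have heq : (fun w => (1 - s) * x w + s * Ffun σ a x w) = x := by
        funext w; rw [hFf]; ring
      show supp (fun v => (1 - s) * x v + s * Ffun σ a x v) ∈ K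
      rw [heq]
      exact hx.2.2
    · push_neg at hzero
      have hout := supp_eq_of_pos hσK ha hfree hx hzero
      have hFout := (Ffun_geom hσ ha hx.1 hx.2.1 hout).2.2.2
      refine hK.2 _ hτK _ (supp_subset_of_vanish ?_) (supp_nonempty ?_)
      · intro v hv
        rw [hout v hv, hFout v hv]; ring
      · rw [Finset.sum_add_distrib, ← Finset.mul_sum, ← Finset.mul_sum, hx.2.1, hF.2.1]
        ring

lemma Ffun_fixed (hσ : σ.Nonempty) (ha : a ∉ σ)
    (hfree : ∀ ρ ∈ K, σ ⊂ ρ → ρ = insert a σ)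
    (hLdef : L = (K.erase σ).erase (insert a σ)) {x : V → ℝ}
    (hx : x ∈ realization K) (hL : x ∈ realization L) : Ffun σ a x = x := by
  have hsuppL : supp x ∈ L := hL.2.2
  rw [hLdef] at hsuppL
  have hne_τ : supp x ≠ insert a σ := (Finset.mem_erase.mp hsuppL).1
  have h2 := Finset.mem_erase.mp (Finset.mem_erase.mp hsuppL).2
  obtain ⟨v, hv, hxv⟩ : ∃ v ∈ σ, x v = 0 := by
    by_contra hcon; push_neg at hcon
    have hsub : σ ⊆ supp x := fun v hv => mem_supp.mpr (hcon v hv)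
    by_cases heq : supp x = σ
    · exact h2.1 heq
    · exact hne_τ (hfree _ h2.2 (hsub.ssubset_of_ne (fun hh => heq hh.symm)))
  exact Ffun_eq_self (tfun_eq_one hσ hx.1 hv hxv)

lemma realization_subset (hLdef : L = (K.erase σ).erase (insert a σ)) :
    realization L ⊆ realization K := by
  intro x hx
  exact ⟨hx.1, hx.2.1, by
    have := hx.2.2
    rw [hLdef] at this
    exact Finset.mem_of_mem_erase (Finset.mem_of_mem_erase this)⟩

lemma Ffun_mem_L (hK : IsComplex K) (hσK : σ ∈ K) (ha : a ∉ σ) (hτK : insert a σ ∈ K)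
    (hfree : ∀ ρ ∈ K, σ ⊂ ρ → ρ = insert a σ)
    (hLdef : L = (K.erase σ).erase (insert a σ)) {x : V → ℝ} (hx : x ∈ realization K) :
    Ffun σ a x ∈ realization L := by
  obtain ⟨⟨h0, h1, h2⟩, hne1, hne2⟩ := Ffun_mem hK hσK ha hτK hfree hx
  exact ⟨h0, h1, by rw [hLdef]; exact Finset.mem_erase.mpr ⟨hne2, Finset.mem_erase.mpr ⟨hne1, h2⟩⟩⟩

end CollapseAux


/-- If there is an elementary collapse from `K` to `L`, then `|L|` is a strong
deformation retract of `|K|`; in particular `|K|` and `|L|` are homotopy equivalent. -/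
theorem elementary_collapse_def_retract [Fintype V] [DecidableEq V]
    (K L : Finset (Finset V)) (hK : IsComplex K) (h : ElemCollapse K L) :
    IsStrongDefRetract {x : ↥(realization K) | (x : V → ℝ) ∈ realization L} ∧
    Nonempty (ContinuousMap.HomotopyEquiv ↥(realization K) ↥(realization L)) := by
  obtain ⟨σ, a, hσK, ha, hσ, hτK, hfree, hLdef⟩ := elem_structure hK h
  have hmemK : ∀ x : ↥(realization K), Ffun σ a (x : V → ℝ) ∈ realization K :=
    fun x => (Ffun_mem hK hσK ha hτK hfree x.2).1
  have hmemL : ∀ x : ↥(realization K), Ffun σ a (x : V → ℝ) ∈ realization L :=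
    fun x => Ffun_mem_L hK hσK ha hτK hfree hLdef x.2
  have hrcont : Continuous fun x : ↥(realization K) => Ffun σ a (x : V → ℝ) :=
    (Ffun_continuous σ a).comp continuous_subtype_val
  let r : C(↥(realization K), ↥(realization K)) :=
    ⟨fun x => ⟨Ffun σ a (x : V → ℝ), hmemK x⟩, hrcont.subtype_mk _⟩
  have hc1 : Continuous fun p : unitInterval × ↥(realization K) => (p.1 : ℝ) :=
    continuous_subtype_val.comp continuous_fst
  have hc2 : Continuous fun p : unitInterval × ↥(realization K) => (p.2 : V → ℝ) :=
    continuous_subtype_val.comp continuous_snd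
  let H : C(unitInterval × ↥(realization K), ↥(realization K)) :=
    ⟨fun p => ⟨fun v => (1 - (p.1 : ℝ)) * (p.2 : V → ℝ) v
        + (p.1 : ℝ) * Ffun σ a (p.2 : V → ℝ) v,
      seg_mem hK hσK ha hτK hfree p.2.2 p.1.2.1 p.1.2.2⟩, by
      apply Continuous.subtype_mk
      apply continuous_pi
      intro v
      exact ((continuous_const.sub hc1).mul ((continuous_apply v).comp hc2)).add
        (hc1.mul ((continuous_apply v).comp ((Ffun_continuous σ a).comp hc2)))⟩
  have hfix : ∀ x : ↥(realization K), (x : V → ℝ) ∈ realization L →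
      Ffun σ a (x : V → ℝ) = (x : V → ℝ) :=
    fun x hx => Ffun_fixed hσ ha hfree hLdef x.2 hx
  constructor
  · refine ⟨r, hmemL, ⟨{ toFun := (fun p => H p), continuous_toFun := H.continuous,
                         map_zero_left := ?_, map_one_left := ?_, prop' := ?_ }⟩⟩
    · intro x
      apply Subtype.ext
      funext v
      show (1 - ((0 : unitInterval) : ℝ)) * (x : V → ℝ) v
        + ((0 : unitInterval) : ℝ) * Ffun σ a (x : V → ℝ) v = (x : V → ℝ) v
      rw [Set.Icc.coe_zero]
      ring
    · intro x
      apply Subtype.ext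
      funext v
      show (1 - ((1 : unitInterval) : ℝ)) * (x : V → ℝ) v
        + ((1 : unitInterval) : ℝ) * Ffun σ a (x : V → ℝ) v = Ffun σ a (x : V → ℝ) v
      rw [Set.Icc.coe_one]
      ring
    · intro t x hx
      apply Subtype.ext
      funext v
      show (1 - (t : ℝ)) * (x : V → ℝ) v + (t : ℝ) * Ffun σ a (x : V → ℝ) v = (x : V → ℝ) v
      rw [hfix x hx]
      ring
  · let f : C(↥(realization K), ↥(realization L)) :=
      ⟨fun x => ⟨Ffun σ a (x : V → ℝ), hmemL x⟩, hrcont.subtype_mk _⟩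
    let g : C(↥(realization L), ↥(realization K)) :=
      ⟨fun y => ⟨(y : V → ℝ), realization_subset hLdef y.2⟩,
        continuous_subtype_val.subtype_mk _⟩
    refine ⟨⟨f, g, ?_, ?_⟩⟩
    · -- (g.comp f).Homotopic id
      apply ContinuousMap.Homotopic.symm
      refine ⟨{ toFun := (fun p => H p), continuous_toFun := H.continuous,
                map_zero_left := ?_, map_one_left := ?_ }⟩
      · intro x
        apply Subtype.ext
        funext v
        show (1 - ((0 : unitInterval) : ℝ)) * (x : V → ℝ) v
          + ((0 : unitInterval) : ℝ) * Ffun σ a (x : V → ℝ) v = (x : V → ℝ) v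
        rw [Set.Icc.coe_zero]
        ring
      · intro x
        apply Subtype.ext
        funext v
        show (1 - ((1 : unitInterval) : ℝ)) * (x : V → ℝ) v
          + ((1 : unitInterval) : ℝ) * Ffun σ a (x : V → ℝ) v = Ffun σ a (x : V → ℝ) v
        rw [Set.Icc.coe_one]
        ring
    · -- (f.comp g).Homotopic id
      have : f.comp g = ContinuousMap.id _ := by
        apply ContinuousMap.ext
        intro y
        apply Subtype.ext
        show Ffun σ a (y : V → ℝ) = (y : V → ℝ)
        exact Ffun_fixed hσ ha hfree hLdef (realization_subset hLdef y.2) y.2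
      rw [this]
end

section
/- If a vertex v of a finite simplicial complex K is dominated by a vertex a, then |K∖v| is a strong deformation retract of |K|; in particular, the inclusion K∖v ↪ K is a homotopy equivalence. -/
open Finset

variable {V : Type*}

-- auxiliary

/-- The ambient retraction map sending the mass at `v` to `a`. -/
def rmap [DecidableEq V] (v a : V) (x : V → ℝ) : V → ℝ :=
  fun w => if w = v then 0 else if w = a then x a + x v else x w

lemma rmap_continuous [DecidableEq V] (v a : V) : Continuous (rmap (V := V) v a) := by
  refine continuous_pi fun w => ?_
  unfold rmap
  split_ifs <;> fun_prop

lemma cone_lemma [DecidableEq V] {K : Finset (Finset V)} (hK : IsComplex K) {v a : V}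
    (hdom : Dominated K v a) : ∀ σ ∈ K, v ∈ σ → insert a σ ∈ K := by
  obtain ⟨hav, hlink, hcone⟩ := hdom
  intro σ hσ hvσ
  by_cases h : σ = {v}
  · subst h
    have := (mem_filter.mp hlink).2.2
    rwa [show insert a {v} = insert v ({a} : Finset V) from Finset.pair_comm a v]
  · set τ := σ.erase v with hτ
    have hτne : τ.Nonempty := by
      have hex : ∃ w ∈ σ, w ≠ v := by
        by_contra hc
        push_neg at hc
        apply h
        apply Finset.Subset.antisymm
        · intro w hw; simp [hc w hw]
        · simp [hvσ]
      obtain ⟨w, hw, hwv⟩ := hex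
      exact ⟨w, Finset.mem_erase.mpr ⟨hwv, hw⟩⟩
    have hτK : τ ∈ K := hK.2 σ hσ τ (Finset.erase_subset _ _) hτne
    have hτlink : τ ∈ link K v := by
      refine mem_filter.mpr ⟨hτK, Finset.notMem_erase _ _, ?_⟩
      rwa [Finset.insert_erase hvσ]
    have := (mem_filter.mp (hcone τ hτlink)).2.2
    rwa [Finset.insert_comm, Finset.insert_erase hvσ] at this

lemma rmap_fix [DecidableEq V] {v a : V} {x : V → ℝ} (hx : x v = 0) :
    rmap v a x = x := by
  funext w
  unfold rmap
  split_ifs with h1 h2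
  · rw [h1, hx]
  · rw [h2, hx, add_zero]
  · rfl

lemma rmap_sum [Fintype V] [DecidableEq V] {v a : V} (hav : a ≠ v) (x : V → ℝ) :
    ∑ w, rmap v a x w = ∑ w, x w := by
  have : ∀ w, rmap v a x w
      = x w + (if w = a then x v else 0) - (if w = v then x v else 0) := by
    intro w
    unfold rmap
    by_cases h1 : w = v
    · subst h1
      simp [Ne.symm hav]
    · by_cases h2 : w = a
      · subst h2; simp [h1]
      · simp [h1, h2]
  simp only [this, Finset.sum_sub_distrib, Finset.sum_add_distrib,
    Finset.sum_ite_eq' Finset.univ, Finset.mem_univ, if_true]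
  ring

lemma rmap_nonneg [DecidableEq V] {v a : V} {x : V → ℝ} (hx : ∀ w, 0 ≤ x w) (w : V) :
    0 ≤ rmap v a x w := by
  unfold rmap
  split_ifs
  · exact le_refl 0
  · exact add_nonneg (hx a) (hx v)
  · exact hx w

lemma del_sub [Fintype V] [DecidableEq V] (K : Finset (Finset V)) (v : V) :
    realization (deleteVertex K v) ⊆ realization K := by
  rintro x ⟨h1, h2, h3⟩
  exact ⟨h1, h2, Finset.mem_of_mem_filter _ h3⟩

lemma comb_mem [Fintype V] [DecidableEq V] {K : Finset (Finset V)} (hK : IsComplex K)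
    {v a : V} (hav : a ≠ v) (hcone : ∀ σ ∈ K, v ∈ σ → insert a σ ∈ K)
    {x : V → ℝ} (hx : x ∈ realization K) {s t : ℝ} (hs : 0 ≤ s) (ht : 0 ≤ t)
    (hst : s + t = 1) :
    (fun w => s * x w + t * rmap v a x w) ∈ realization K := by
  obtain ⟨hpos, hsum, hsupp⟩ := hx
  have hpos' : ∀ w, 0 ≤ s * x w + t * rmap v a x w := fun w =>
    add_nonneg (mul_nonneg hs (hpos w)) (mul_nonneg ht (rmap_nonneg hpos w))
  have hsum' : ∑ w, (s * x w + t * rmap v a x w) = 1 := by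
    rw [Finset.sum_add_distrib, ← Finset.mul_sum, ← Finset.mul_sum, rmap_sum hav, hsum]
    linarith
  refine ⟨hpos', hsum', ?_⟩
  by_cases hxv : x v = 0
  · have heq : (fun w => s * x w + t * rmap v a x w) = x := by
      funext w
      rw [rmap_fix hxv, ← add_mul, hst, one_mul]
    rw [heq]
    exact hsupp
  · have hvx : v ∈ Finset.univ.filter (fun w => x w ≠ 0) := by
      simp [hxv]
    have hins : insert a (Finset.univ.filter (fun w => x w ≠ 0)) ∈ K :=
      hcone _ hsupp hvx
    have hsub : Finset.univ.filter (fun w => s * x w + t * rmap v a x w ≠ 0)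
        ⊆ insert a (Finset.univ.filter (fun w => x w ≠ 0)) := by
      intro w hw
      simp only [Finset.mem_filter, Finset.mem_univ, true_and] at hw
      by_cases hwa : w = a
      · exact Finset.mem_insert.mpr (Or.inl hwa)
      · refine Finset.mem_insert.mpr (Or.inr ?_)
        simp only [Finset.mem_filter, Finset.mem_univ, true_and]
        intro hxw
        apply hw
        by_cases hwv : w = v
        · subst hwv; simp [rmap, hxw]
        · simp [rmap, hwv, hwa, hxw]
    have hne : (Finset.univ.filter (fun w => s * x w + t * rmap v a x w ≠ 0)).Nonempty := by
      by_contra hc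
      rw [Finset.not_nonempty_iff_eq_empty, Finset.filter_eq_empty_iff] at hc
      have : ∑ w, (s * x w + t * rmap v a x w) = 0 :=
        Finset.sum_eq_zero (fun w hw => not_not.mp (hc hw))
      rw [hsum'] at this
      norm_num at this
    exact hK.2 _ hins _ hsub hne

lemma rmap_mem [Fintype V] [DecidableEq V] {K : Finset (Finset V)} (hK : IsComplex K)
    {v a : V} (hav : a ≠ v) (hcone : ∀ σ ∈ K, v ∈ σ → insert a σ ∈ K)
    {x : V → ℝ} (hx : x ∈ realization K) :
    rmap v a x ∈ realization (deleteVertex K v) := by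
  have h1 : (fun w => (0:ℝ) * x w + 1 * rmap v a x w) ∈ realization K :=
    comb_mem hK hav hcone hx le_rfl zero_le_one (by norm_num)
  have heq : (fun w => (0:ℝ) * x w + 1 * rmap v a x w) = rmap v a x := by
    funext w; ring
  rw [heq] at h1
  obtain ⟨hpos, hsum, hsupp⟩ := h1
  refine ⟨hpos, hsum, ?_⟩
  refine Finset.mem_filter.mpr ⟨hsupp, ?_⟩
  simp [rmap]

lemma mem_del_zero [Fintype V] [DecidableEq V] {K : Finset (Finset V)} {v : V}
    {x : V → ℝ} (hx : x ∈ realization (deleteVertex K v)) : x v = 0 := by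
  obtain ⟨-, -, hsupp⟩ := hx
  have := (Finset.mem_filter.mp hsupp).2
  by_contra h
  exact this (Finset.mem_filter.mpr ⟨Finset.mem_univ v, h⟩)

/-- If `v` is dominated by `a` in `K`, then `|K ∖ v|` is a strong deformation retract of
`|K|`; in particular the inclusion `K ∖ v ↪ K` induces a homotopy equivalence. -/
theorem dominated_def_retract [Fintype V] [DecidableEq V]
    (K : Finset (Finset V)) (hK : IsComplex K) (v a : V)
    (hv : ({v} : Finset V) ∈ K) (hdom : Dominated K v a) :
    IsStrongDefRetract {x : ↥(realization K) | (x : V → ℝ) ∈ realization (deleteVertex K v)} ∧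
    Nonempty (ContinuousMap.HomotopyEquiv ↥(realization K) ↥(realization (deleteVertex K v))) := by
  have hav : a ≠ v := hdom.1
  have hcone : ∀ σ ∈ K, v ∈ σ → insert a σ ∈ K := cone_lemma hK hdom
  set X := ↥(realization K)
  set A : Set X := {x : X | (x : V → ℝ) ∈ realization (deleteVertex K v)} with hA
  -- the retraction
  have hrmem : ∀ x : X, rmap v a (x : V → ℝ) ∈ realization (deleteVertex K v) :=
    fun x => rmap_mem hK hav hcone x.2
  let r : C(X, X) := ⟨fun x => ⟨rmap v a (x : V → ℝ), del_sub K v (hrmem x)⟩,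
    Continuous.subtype_mk ((rmap_continuous v a).comp continuous_subtype_val) _⟩
  -- the homotopy
  have hFmem : ∀ (p : unitInterval × X),
      (fun w => (1 - (p.1 : ℝ)) * (p.2 : V → ℝ) w + (p.1 : ℝ) * rmap v a (p.2 : V → ℝ) w)
        ∈ realization K := by
    intro p
    exact comb_mem hK hav hcone p.2.2 (by have := p.1.2.2; linarith) p.1.2.1 (by ring)
  let F : C(unitInterval × X, X) :=
    ⟨fun p => ⟨fun w => (1 - (p.1 : ℝ)) * (p.2 : V → ℝ) w + (p.1 : ℝ) * rmap v a (p.2 : V → ℝ) w,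
      hFmem p⟩, by
      refine Continuous.subtype_mk ?_ _
      refine continuous_pi fun w => ?_
      have h1 : Continuous fun p : unitInterval × X => (p.1 : ℝ) :=
        continuous_subtype_val.comp continuous_fst
      have h2 : Continuous fun p : unitInterval × X => ((p.2 : V → ℝ) w) :=
        (continuous_apply w).comp (continuous_subtype_val.comp continuous_snd)
      have h3 : Continuous fun p : unitInterval × X => rmap v a (p.2 : V → ℝ) w :=
        (continuous_apply w).comp
          ((rmap_continuous v a).comp (continuous_subtype_val.comp continuous_snd))
      exact ((continuous_const.sub h1).mul h2).add (h1.mul h3)⟩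
  have hfix : ∀ x : X, x ∈ A → rmap v a (x : V → ℝ) = (x : V → ℝ) :=
    fun x hx => rmap_fix (mem_del_zero hx)
  have hrel : Nonempty ((ContinuousMap.id X).HomotopyRel r A) := by
    refine ⟨⟨⟨F, ?_, ?_⟩, ?_⟩⟩
    · intro x
      apply Subtype.ext
      funext w
      simp [F]
    · intro x
      apply Subtype.ext
      funext w
      simp [F, r]
    · intro t x hx
      apply Subtype.ext
      funext w
      have := congrFun (hfix x hx) w
      simp only [F, ContinuousMap.coe_mk, ContinuousMap.id_apply, this]
      ring
  refine ⟨⟨r, fun x => hrmem x, hrel⟩, ?_⟩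
  -- homotopy equivalence
  let r' : C(X, ↥(realization (deleteVertex K v))) :=
    ⟨fun x => ⟨rmap v a (x : V → ℝ), hrmem x⟩,
      Continuous.subtype_mk ((rmap_continuous v a).comp continuous_subtype_val) _⟩
  let i : C(↥(realization (deleteVertex K v)), X) :=
    ⟨fun y => ⟨(y : V → ℝ), del_sub K v y.2⟩,
      Continuous.subtype_mk continuous_subtype_val _⟩
  refine ⟨⟨r', i, ?_, ?_⟩⟩
  · -- i.comp r' homotopic to id on X
    obtain ⟨H⟩ := hrel
    have key : i.comp r' = r := by
      ext x
      rfl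
    rw [key]
    exact ⟨H.toHomotopy.symm⟩
  · -- r'.comp i homotopic to id on realization(deleteVertex)
    have key : r'.comp i = ContinuousMap.id _ := by
      ext y
      exact congrFun (rmap_fix (mem_del_zero y.2)) _
    rw [key]
end

section
/- Any two minimal strong cores of a finite simplicial complex K are isomorphic as simplicial complexes: if K strong collapses to L₁ and to L₂, and neither L₁ nor L₂ has a dominated vertex, then L₁ ≅ L₂. -/
open Finset

variable {V : Type*}

section Aux

variable [DecidableEq V]

lemma mem_link {K : Finset (Finset V)} {v : V} {σ : Finset V} :
    σ ∈ link K v ↔ σ ∈ K ∧ v ∉ σ ∧ insert v σ ∈ K := by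
  simp [link, Finset.mem_filter, and_assoc]

lemma mem_del {K : Finset (Finset V)} {v : V} {σ : Finset V} :
    σ ∈ deleteVertex K v ↔ σ ∈ K ∧ v ∉ σ := by
  simp [deleteVertex, Finset.mem_filter]


lemma mem_image_equiv {σ : Finset V} (e : V ≃ V) (v : V) :
    e v ∈ σ.image e ↔ v ∈ σ := by
  simp only [Finset.mem_image]
  exact ⟨fun ⟨x, hx, hxe⟩ => e.injective hxe ▸ hx, fun h => ⟨v, h, rfl⟩⟩

lemma isComplex_del {K : Finset (Finset V)} {v : V} (hK : IsComplex K) :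
    IsComplex (deleteVertex K v) := by
  constructor
  · intro σ hσ; exact hK.1 σ (mem_del.mp hσ).1
  · intro σ hσ τ hτ hne
    rw [mem_del] at hσ ⊢
    exact ⟨hK.2 σ hσ.1 τ hτ hne, fun hv => hσ.2 (hτ hv)⟩

lemma elemSC_isComplex {K L : Finset (Finset V)} (h : ElemSC K L) (hK : IsComplex K) :
    IsComplex L := by
  obtain ⟨v, a, _, _, rfl⟩ := h
  exact isComplex_del hK

lemma rtg_isComplex {K L : Finset (Finset V)}
    (h : Relation.ReflTransGen (ElemSC (V := V)) K L) (hK : IsComplex K) : IsComplex L := by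
  induction h with
  | refl => exact hK
  | tail _ step ih => exact elemSC_isComplex step ih

lemma elemSC_card {K L : Finset (Finset V)} (h : ElemSC K L) : L.card < K.card := by
  obtain ⟨v, a, hv, _, rfl⟩ := h
  refine Finset.card_lt_card ⟨Finset.filter_subset _ _, fun hsub => ?_⟩
  have := hsub hv
  rw [mem_del] at this
  exact this.2 (Finset.mem_singleton_self v)

lemma del_comm (K : Finset (Finset V)) (v w : V) :
    deleteVertex (deleteVertex K v) w = deleteVertex (deleteVertex K w) v := by
  ext σ; simp [mem_del]; tauto

lemma mem_link_del {K : Finset (Finset V)} {v w : V} {σ : Finset V} (hwv : w ≠ v) :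
    σ ∈ link (deleteVertex K v) w ↔ σ ∈ link K w ∧ v ∉ σ := by
  simp only [mem_link, mem_del, Finset.mem_insert]
  constructor
  · rintro ⟨⟨h1, h2⟩, h3, h4, h5⟩; exact ⟨⟨h1, h3, h4⟩, h2⟩
  · rintro ⟨⟨h1, h3, h4⟩, h2⟩
    refine ⟨⟨h1, h2⟩, h3, h4, ?_⟩
    rintro (rfl | hv)
    · exact hwv rfl
    · exact h2 hv

lemma dom_del {K : Finset (Finset V)} {v w b : V} (hw : Dominated K w b) (hbv : b ≠ v)
    (hwv : w ≠ v) : Dominated (deleteVertex K v) w b := by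
  obtain ⟨hbw, hlink, hcone⟩ := hw
  refine ⟨hbw, ?_, ?_⟩
  · rw [mem_link_del hwv]
    exact ⟨hlink, by simp [Ne.symm hbv]⟩
  · intro σ hσ
    rw [mem_link_del hwv] at hσ ⊢
    refine ⟨hcone σ hσ.1, ?_⟩
    simp only [Finset.mem_insert]
    rintro (rfl | hv)
    · exact hbv rfl
    · exact hσ.2 hv

/-- If `v` is dominated by `a` and `w` is dominated by `v`, with `a ≠ w`,
then `w` is dominated by `a`. -/
lemma dom_trans {K : Finset (Finset V)} {v a w : V} (hK : IsComplex K)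
    (hva : Dominated K v a) (hwv : Dominated K w v) (haw : a ≠ w) : Dominated K w a := by
  obtain ⟨hav, _, cone_v⟩ := hva
  obtain ⟨hvw, hv_link, cone_w⟩ := hwv
  rw [mem_link] at hv_link
  obtain ⟨hvK, hwv', hwvK⟩ := hv_link
  -- {w} ∈ link K v
  have hw_linkv : ({w} : Finset V) ∈ link K v := by
    rw [mem_link]
    refine ⟨hK.2 _ hwvK {w} (by simp) (Finset.singleton_nonempty w), by simp [hvw], ?_⟩
    exact hK.2 _ hwvK _ (by intro x; simp; tauto) (Finset.insert_nonempty _ _)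
  have haw_link := cone_v _ hw_linkv
  rw [mem_link] at haw_link
  have hawK : insert a {w} ∈ K := haw_link.1
  refine ⟨haw, ?_, ?_⟩
  · rw [mem_link]
    refine ⟨hK.2 _ hawK {a} (by simp) (Finset.singleton_nonempty a),
      by simp [Ne.symm haw], ?_⟩
    exact hK.2 _ hawK _ (by intro x; simp; tauto) (Finset.insert_nonempty _ _)
  · intro σ hσ
    have hσ' := mem_link.mp hσ
    obtain ⟨hσK, hwσ, hσwK⟩ := hσ'
    set τ := (insert w σ).erase v with hτdef
    have hτins : insert v τ = insert w (insert v σ) := by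
      ext x
      simp only [hτdef, Finset.mem_insert, Finset.mem_erase]
      by_cases hx : x = v <;> simp [hx] <;> tauto
    have hwτ : w ∈ τ := by
      rw [hτdef, Finset.mem_erase]
      exact ⟨Ne.symm hvw, Finset.mem_insert_self w σ⟩
    have hτ_link : τ ∈ link K v := by
      rw [mem_link]
      refine ⟨hK.2 _ hσwK τ (Finset.erase_subset _ _) ⟨w, hwτ⟩, Finset.notMem_erase _ _, ?_⟩
      rw [hτins]
      exact (mem_link.mp (cone_w σ hσ)).2.2
    have hcone := cone_v τ hτ_link
    rw [mem_link] at hcone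
    have hbig : insert a (insert w (insert v σ)) ∈ K := by
      refine hK.2 _ hcone.2.2 _ ?_ (Finset.insert_nonempty _ _)
      intro x hx
      simp only [Finset.mem_insert, hτdef, Finset.mem_erase] at hx ⊢
      rcases hx with h | h | h | h
      · exact Or.inr (Or.inl h)
      · subst h
        exact Or.inr (Or.inr ⟨Ne.symm hvw, Or.inl rfl⟩)
      · exact Or.inl h
      · by_cases hxv : x = v
        · exact Or.inl hxv
        · exact Or.inr (Or.inr ⟨hxv, Or.inr h⟩)
    rw [mem_link]
    refine ⟨hK.2 _ hbig _ ?_ (Finset.insert_nonempty _ _), ?_, hK.2 _ hbig _ ?_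
      (Finset.insert_nonempty _ _)⟩
    · intro x hx
      simp only [Finset.mem_insert] at hx ⊢
      tauto
    · simp only [Finset.mem_insert]
      rintro (rfl | hx)
      · exact haw rfl
      · exact hwσ hx
    · intro x hx
      simp only [Finset.mem_insert] at hx ⊢
      tauto

/-- Key step for the swap isomorphism. -/
lemma swap_key {K : Finset (Finset V)} {v w : V} (hK : IsComplex K)
    (hwv : Dominated K w v) {σ : Finset V} (hσ : σ ∈ K) (hv : v ∉ σ) (hw : w ∈ σ) :
    insert v (σ.erase w) ∈ K := by
  obtain ⟨hvw, hv_link, cone_w⟩ := hwv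
  rcases Finset.eq_empty_or_nonempty (σ.erase w) with he | hne
  · have : σ = {w} := by
      apply Finset.eq_singleton_iff_unique_mem.mpr
      refine ⟨hw, fun x hx => ?_⟩
      by_contra hxw
      exact absurd (Finset.mem_erase.mpr ⟨hxw, hx⟩) (by simp [he])
    rw [this, Finset.erase_singleton]
    exact (mem_link.mp hv_link).1
  · have hlink : σ.erase w ∈ link K w := by
      rw [mem_link]
      exact ⟨hK.2 σ hσ _ (Finset.erase_subset _ _) hne, Finset.notMem_erase _ _,
        by rw [Finset.insert_erase hw]; exact hσ⟩
    exact (mem_link.mp (cone_w _ hlink)).1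

lemma image_swap_mem {v w : V} {σ : Finset V} (hv : v ∉ σ) (hw : w ∈ σ) :
    σ.image (Equiv.swap v w) = insert v (σ.erase w) := by
  ext x
  simp only [Finset.mem_image, Finset.mem_insert, Finset.mem_erase]
  constructor
  · rintro ⟨y, hy, rfl⟩
    rcases eq_or_ne y w with rfl | hyw
    · left; rw [Equiv.swap_apply_right]
    · have hyv : y ≠ v := fun h => hv (h ▸ hy)
      right
      rw [Equiv.swap_apply_of_ne_of_ne hyv hyw]
      exact ⟨hyw, hy⟩
  · rintro (h | ⟨hxw, hx⟩)
    · exact ⟨w, hw, (Equiv.swap_apply_right v w).trans h.symm⟩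
    · have hxv : x ≠ v := fun h => hv (h ▸ hx)
      exact ⟨x, hx, Equiv.swap_apply_of_ne_of_ne hxv hxw⟩

lemma image_swap_id {v w : V} {σ : Finset V} (hv : v ∉ σ) (hw : w ∉ σ) :
    σ.image (Equiv.swap v w) = σ := by
  rw [Finset.image_congr (g := id), Finset.image_id]
  intro x hx
  exact Equiv.swap_apply_of_ne_of_ne (fun h => hv (h ▸ hx)) (fun h => hw (h ▸ hx))

/-- The swap isomorphism in the case of mutual domination. -/
lemma swap_iso {K : Finset (Finset V)} {v w : V} (hK : IsComplex K)
    (hvw : Dominated K v w) (hwv : Dominated K w v) :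
    ∀ σ : Finset V, σ ∈ deleteVertex K v ↔ σ.image (Equiv.swap v w) ∈ deleteVertex K w := by
  have hne : v ≠ w := Ne.symm hvw.1
  intro σ
  by_cases hv : v ∈ σ
  · refine iff_of_false (fun h => (mem_del.mp h).2 hv) (fun h => (mem_del.mp h).2 ?_)
    rw [Finset.mem_image]
    exact ⟨v, hv, Equiv.swap_apply_left v w⟩
  · by_cases hw : w ∈ σ
    · rw [image_swap_mem hv hw, mem_del, mem_del]
      have hwn : w ∉ insert v (σ.erase w) := by
        simp only [Finset.mem_insert, Finset.mem_erase]
        rintro (rfl | ⟨h, _⟩)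
        · exact hne rfl
        · exact h rfl
      constructor
      · rintro ⟨hσK, _⟩
        exact ⟨swap_key hK hwv hσK hv hw, hwn⟩
      · rintro ⟨hτK, _⟩
        have hvτ : v ∈ insert v (σ.erase w) := Finset.mem_insert_self _ _
        have := swap_key hK hvw hτK hwn hvτ
        have heq : insert w ((insert v (σ.erase w)).erase v) = σ := by
          rw [Finset.erase_insert (by simp [Finset.mem_erase]; tauto),
            Finset.insert_erase hw]
        rw [heq] at this
        exact ⟨this, hv⟩
    · rw [image_swap_id hv hw, mem_del, mem_del]
      tauto

/-- Simplicial isomorphism via a global equivalence. -/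
def SIso (L₁ L₂ : Finset (Finset V)) : Prop :=
  ∃ e : V ≃ V, ∀ σ : Finset V, σ ∈ L₁ ↔ σ.image e ∈ L₂

lemma iff_symm {K K' : Finset (Finset V)} (e : V ≃ V)
    (h : ∀ σ : Finset V, σ ∈ K ↔ σ.image e ∈ K') :
    ∀ σ : Finset V, σ ∈ K' ↔ σ.image e.symm ∈ K := by
  intro σ
  rw [h (σ.image e.symm), Finset.image_image]
  simp

lemma sIso_refl (L : Finset (Finset V)) : SIso L L :=
  ⟨Equiv.refl V, fun σ => by simp⟩

lemma sIso_symm {L₁ L₂ : Finset (Finset V)} (h : SIso L₁ L₂) : SIso L₂ L₁ := by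
  obtain ⟨e, he⟩ := h
  exact ⟨e.symm, iff_symm e he⟩

lemma sIso_trans {L₁ L₂ L₃ : Finset (Finset V)} (h : SIso L₁ L₂) (h' : SIso L₂ L₃) :
    SIso L₁ L₃ := by
  obtain ⟨e, he⟩ := h
  obtain ⟨f, hf⟩ := h'
  refine ⟨e.trans f, fun σ => ?_⟩
  rw [he σ, hf (σ.image e), Finset.image_image]
  rfl

lemma link_map {K K' : Finset (Finset V)} (e : V ≃ V)
    (h : ∀ σ : Finset V, σ ∈ K ↔ σ.image e ∈ K') (v : V) (σ : Finset V) :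
    σ ∈ link K v ↔ σ.image e ∈ link K' (e v) := by
  rw [mem_link, mem_link, h σ, ← Finset.image_insert, ← h (insert v σ)]
  have : v ∉ σ ↔ e v ∉ σ.image e := not_congr (mem_image_equiv e v).symm
  tauto

lemma dom_map {K K' : Finset (Finset V)} (e : V ≃ V)
    (h : ∀ σ : Finset V, σ ∈ K ↔ σ.image e ∈ K') {v a : V} (hd : Dominated K v a) :
    Dominated K' (e v) (e a) := by
  obtain ⟨hav, hl, hc⟩ := hd
  refine ⟨fun heq => hav (e.injective heq), ?_, ?_⟩
  · have := (link_map e h v {a}).mp hl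
    rwa [Finset.image_singleton] at this
  · intro σ hσ
    have hσ' : σ.image e.symm ∈ link K v := by
      rw [link_map e h v]
      rwa [Finset.image_image, show (⇑e ∘ ⇑e.symm) = id from funext e.apply_symm_apply,
        Finset.image_id]
    have := (link_map e h v _).mp (hc _ hσ')
    rwa [Finset.image_insert, Finset.image_image,
      show (⇑e ∘ ⇑e.symm) = id from funext e.apply_symm_apply, Finset.image_id] at this

lemma elemSC_map {K K' L : Finset (Finset V)} (e : V ≃ V)
    (h : ∀ σ : Finset V, σ ∈ K ↔ σ.image e ∈ K') (hKL : ElemSC K L) :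
    ∃ L', ElemSC K' L' ∧ ∀ σ : Finset V, σ ∈ L ↔ σ.image e ∈ L' := by
  obtain ⟨v, a, hv, hd, rfl⟩ := hKL
  refine ⟨deleteVertex K' (e v), ⟨e v, e a, ?_, dom_map e h hd, rfl⟩, fun σ => ?_⟩
  · have := (h {v}).mp hv
    rwa [Finset.image_singleton] at this
  · rw [mem_del, mem_del, h σ]
    have := mem_image_equiv (σ := σ) e v
    tauto

lemma rtg_map {K L : Finset (Finset V)} (e : V ≃ V)
    (hr : Relation.ReflTransGen (ElemSC (V := V)) K L) {K' : Finset (Finset V)}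
    (h : ∀ σ : Finset V, σ ∈ K ↔ σ.image e ∈ K') :
    ∃ L', Relation.ReflTransGen (ElemSC (V := V)) K' L' ∧
      ∀ σ : Finset V, σ ∈ L ↔ σ.image e ∈ L' := by
  induction hr with
  | refl => exact ⟨K', Relation.ReflTransGen.refl, h⟩
  | tail _ step ih =>
    obtain ⟨M', rM', cM⟩ := ih
    obtain ⟨L', sL', cL⟩ := elemSC_map e cM step
    exact ⟨L', rM'.tail sL', cL⟩

lemma min_map {L L' : Finset (Finset V)} (e : V ≃ V)
    (h : ∀ σ : Finset V, σ ∈ L ↔ σ.image e ∈ L')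
    (hm : ¬ ∃ v a, ({v} : Finset V) ∈ L ∧ Dominated L v a) :
    ¬ ∃ v a, ({v} : Finset V) ∈ L' ∧ Dominated L' v a := by
  rintro ⟨v, a, hv, hd⟩
  have h' := iff_symm e h
  refine hm ⟨e.symm v, e.symm a, ?_, dom_map e.symm h' hd⟩
  have := (h' {v}).mp hv
  rwa [Finset.image_singleton] at this

lemma exists_core : ∀ (n : ℕ) (K : Finset (Finset V)), K.card ≤ n →
    ∃ L, Relation.ReflTransGen (ElemSC (V := V)) K L ∧
      ¬ ∃ v a, ({v} : Finset V) ∈ L ∧ Dominated L v a := by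
  intro n
  induction n with
  | zero =>
    intro K hK
    refine ⟨K, Relation.ReflTransGen.refl, ?_⟩
    rintro ⟨v, a, hv, _⟩
    have : K = ∅ := Finset.card_eq_zero.mp (Nat.le_zero.mp hK)
    simp [this] at hv
  | succ n ih =>
    intro K hK
    by_cases h : ∃ v a, ({v} : Finset V) ∈ K ∧ Dominated K v a
    · obtain ⟨v, a, hv, hd⟩ := h
      have step : ElemSC K (deleteVertex K v) := ⟨v, a, hv, hd, rfl⟩
      have hcard : (deleteVertex K v).card ≤ n :=
        Nat.lt_succ_iff.mp (lt_of_lt_of_le (elemSC_card step) hK)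
      obtain ⟨L, hL, hm⟩ := ih _ hcard
      exact ⟨L, Relation.ReflTransGen.head step hL, hm⟩
    · exact ⟨K, Relation.ReflTransGen.refl, h⟩

lemma main : ∀ (n : ℕ) (K L₁ L₂ : Finset (Finset V)), K.card ≤ n → IsComplex K →
    Relation.ReflTransGen (ElemSC (V := V)) K L₁ →
    Relation.ReflTransGen (ElemSC (V := V)) K L₂ →
    (¬ ∃ v a, ({v} : Finset V) ∈ L₁ ∧ Dominated L₁ v a) →
    (¬ ∃ v a, ({v} : Finset V) ∈ L₂ ∧ Dominated L₂ v a) →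
    SIso L₁ L₂ := by
  intro n
  induction n with
  | zero =>
    intro K L₁ L₂ hc hK h1 h2 m1 m2
    have hKe : K = ∅ := Finset.card_eq_zero.mp (Nat.le_zero.mp hc)
    subst hKe
    rcases h1.cases_head with rfl | ⟨K₁, s1, _⟩
    · rcases h2.cases_head with rfl | ⟨K₂, s2, _⟩
      · exact sIso_refl _
      · obtain ⟨v, a, hv, _, _⟩ := s2; simp at hv
    · obtain ⟨v, a, hv, _, _⟩ := s1; simp at hv
  | succ n IH =>
    intro K L₁ L₂ hcard hK h1 h2 m1 m2
    rcases h1.cases_head with rfl | ⟨K₁, s1, r1⟩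
    · rcases h2.cases_head with rfl | ⟨K₂, s2, r2⟩
      · exact sIso_refl _
      · obtain ⟨v, a, hv, hd, _⟩ := s2
        exact absurd ⟨v, a, hv, hd⟩ m1
    · rcases h2.cases_head with rfl | ⟨K₂, s2, r2⟩
      · obtain ⟨v, a, hv, hd, _⟩ := s1
        exact absurd ⟨v, a, hv, hd⟩ m2
      · obtain ⟨v, a, hv, hva, rfl⟩ := s1
        obtain ⟨w, b, hw, hwb, rfl⟩ := s2
        have hK₁ : IsComplex (deleteVertex K v) := isComplex_del hK
        have hK₂ : IsComplex (deleteVertex K w) := isComplex_del hK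
        have hcard₁ : (deleteVertex K v).card ≤ n :=
          Nat.lt_succ_iff.mp (lt_of_lt_of_le (elemSC_card ⟨v, a, hv, hva, rfl⟩) hcard)
        have hcard₂ : (deleteVertex K w).card ≤ n :=
          Nat.lt_succ_iff.mp (lt_of_lt_of_le (elemSC_card ⟨w, b, hw, hwb, rfl⟩) hcard)
        by_cases hvw : v = w
        · subst hvw
          exact IH (deleteVertex K v) L₁ L₂ hcard₁ hK₁ r1 r2 m1 m2
        · by_cases hsw : a = w ∧ b = v
          · -- mutual domination: swap isomorphism
            have hvwD : Dominated K v w := hsw.1 ▸ hva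
            have hwvD : Dominated K w v := hsw.2 ▸ hwb
            have hiso := swap_iso hK hvwD hwvD
            obtain ⟨L₁', r1', c1⟩ := rtg_map (Equiv.swap v w) r1 hiso
            have m1' := min_map (Equiv.swap v w) c1 m1
            have hmain := IH (deleteVertex K w) L₁' L₂ hcard₂ hK₂ r1' r2 m1' m2
            exact sIso_trans ⟨Equiv.swap v w, c1⟩ hmain
          · -- exact square
            have hb' : ∃ b', b' ≠ v ∧ Dominated K w b' := by
              by_cases hbv : b = v
              · have haw : a ≠ w := fun h => hsw ⟨h, hbv⟩
                exact ⟨a, hva.1, dom_trans hK hva (hbv ▸ hwb) haw⟩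
              · exact ⟨b, hbv, hwb⟩
            have ha' : ∃ a', a' ≠ w ∧ Dominated K v a' := by
              by_cases haw : a = w
              · have hbv : b ≠ v := fun h => hsw ⟨haw, h⟩
                exact ⟨b, hwb.1, dom_trans hK hwb (haw ▸ hva) hbv⟩
              · exact ⟨a, haw, hva⟩
            obtain ⟨b', hb'v, hdb'⟩ := hb'
            obtain ⟨a', ha'w, hda'⟩ := ha'
            have sM1 : ElemSC (deleteVertex K v) (deleteVertex (deleteVertex K v) w) :=
              ⟨w, b', mem_del.mpr ⟨hw, by simp [hvw]⟩,
                dom_del hdb' hb'v (Ne.symm hvw), rfl⟩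
            have sM2 : ElemSC (deleteVertex K w) (deleteVertex (deleteVertex K v) w) := by
              rw [del_comm]
              exact ⟨v, a', mem_del.mpr ⟨hv, by simp [Ne.symm hvw]⟩, dom_del hda' ha'w hvw, rfl⟩
            obtain ⟨N, rN, mN⟩ :=
              exists_core (V := V) (deleteVertex (deleteVertex K v) w).card _ le_rfl
            have r1N : Relation.ReflTransGen (ElemSC (V := V)) (deleteVertex K v) N :=
              Relation.ReflTransGen.head sM1 rN
            have r2N : Relation.ReflTransGen (ElemSC (V := V)) (deleteVertex K w) N :=
              Relation.ReflTransGen.head sM2 rN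
            have i1 := IH (deleteVertex K v) L₁ N hcard₁ hK₁ r1 r1N m1 mN
            have i2 := IH (deleteVertex K w) L₂ N hcard₂ hK₂ r2 r2N m2 mN
            exact sIso_trans i1 (sIso_symm i2)

end Aux

/-- Uniqueness of the minimal strong core: if `K` strong collapses to `L₁` and to `L₂`,
and neither has a dominated vertex, then `L₁` and `L₂` are isomorphic simplicial
complexes. -/
theorem minimal_strong_core_unique [DecidableEq V] (K L₁ L₂ : Finset (Finset V))
    (hK : IsComplex K)
    (h1 : Relation.ReflTransGen (ElemSC (V := V)) K L₁)
    (h2 : Relation.ReflTransGen (ElemSC (V := V)) K L₂)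
    (m1 : ¬ ∃ v a, ({v} : Finset V) ∈ L₁ ∧ Dominated L₁ v a)
    (m2 : ¬ ∃ v a, ({v} : Finset V) ∈ L₂ ∧ Dominated L₂ v a) :
    ∃ f : V → V, Set.BijOn f {v | ({v} : Finset V) ∈ L₁} {v | ({v} : Finset V) ∈ L₂} ∧
      ∀ σ : Finset V, σ ∈ L₁ ↔ σ.image f ∈ L₂ := by
  obtain ⟨e, he⟩ := main K.card K L₁ L₂ le_rfl hK h1 h2 m1 m2
  refine ⟨e, ⟨?_, ?_, ?_⟩, he⟩
  · intro x hx
    have := (he {x}).mp hx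
    rwa [Finset.image_singleton] at this
  · exact Set.injOn_of_injective e.injective
  · intro y hy
    refine ⟨e.symm y, ?_, e.apply_symm_apply y⟩
    have : ({e.symm y} : Finset V).image e ∈ L₂ := by
      rwa [Finset.image_singleton, e.apply_symm_apply]
    exact (he _).mpr this
end

section
/- If v is a dominated vertex of a finite simplicial complex K (dominated by a), then K collapses to K∖v in the sense of Whitehead: there is a sequence of elementary collapses (removals of free-face pairs) from K to K∖v. -/
open Finset

variable {V : Type*}

private lemma insert_apex_mem [DecidableEq V] {K : Finset (Finset V)} (hK : IsComplex K)
    {v a : V} (hdom : Dominated K v a) {τ : Finset V} (hτ : τ ∈ K) (hvτ : v ∈ τ) :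
    insert a τ ∈ K := by
  obtain ⟨hav, hla, hcone⟩ := hdom
  by_cases h : τ = {v}
  · subst h
    have h2 : insert v ({a} : Finset V) ∈ K := (mem_filter.mp hla).2.2
    have : insert a ({v} : Finset V) = insert v ({a} : Finset V) := by
      ext x; simp; tauto
    rwa [this]
  · have hρne : (τ.erase v).Nonempty := by
      rcases (τ.erase v).eq_empty_or_nonempty with he | hne
      · exfalso
        apply h
        refine Finset.eq_singleton_iff_unique_mem.mpr ⟨hvτ, fun x hx => ?_⟩
        by_contra hxv
        have hxe : x ∈ τ.erase v := mem_erase.mpr ⟨hxv, hx⟩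
        simp [he] at hxe
      · exact hne
    have hρK : τ.erase v ∈ K := hK.2 τ hτ _ (erase_subset _ _) hρne
    have hρl : τ.erase v ∈ link K v := by
      refine mem_filter.mpr ⟨hρK, notMem_erase _ _, ?_⟩
      rwa [insert_erase hvτ]
    have h2 : insert v (insert a (τ.erase v)) ∈ K := (mem_filter.mp (hcone _ hρl)).2.2
    rwa [Finset.insert_comm, insert_erase hvτ] at h2

private lemma collapse_aux [DecidableEq V] (v a : V) :
    ∀ n (K : Finset (Finset V)), (K.filter (fun σ => v ∈ σ)).card = n →
      IsComplex K → ({v} : Finset V) ∈ K → Dominated K v a →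
      Relation.ReflTransGen (ElemCollapse (V := V)) K (deleteVertex K v) := by
  intro n
  induction n using Nat.strong_induction_on with
  | _ n IH =>
    intro K hn hK hv hdom
    have hav : a ≠ v := hdom.1
    -- the set of simplices containing v but not a
    set S : Finset (Finset V) := K.filter (fun τ => v ∈ τ ∧ a ∉ τ) with hSdef
    have hvS : ({v} : Finset V) ∈ S := by
      refine mem_filter.mpr ⟨hv, mem_singleton_self v, ?_⟩
      simp [hav]
    obtain ⟨σ, hσS, hmax⟩ := S.exists_max_image (fun τ => τ.card) ⟨_, hvS⟩
    obtain ⟨hσK, hvσ, haσ⟩ := mem_filter.mp hσS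
    have hins : insert a σ ∈ K := insert_apex_mem hK hdom hσK hvσ
    -- freeness
    have hfree : ∀ τ ∈ K, σ ⊆ τ → τ = σ ∨ τ = insert a σ := by
      intro τ hτ hsub
      rcases eq_or_ssubset_of_subset hsub with h | h
      · exact Or.inl h.symm
      · right
        have hvτ : v ∈ τ := hsub hvσ
        by_cases haτ : a ∈ τ
        · have hvπ : v ∈ τ.erase a := mem_erase.mpr ⟨fun hx => hav hx.symm, hvτ⟩
          have hπK : τ.erase a ∈ K := hK.2 τ hτ _ (erase_subset _ _) ⟨v, hvπ⟩
          have hσπ : σ ⊆ τ.erase a := subset_erase.mpr ⟨h.subset, haσ⟩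
          have hπS : τ.erase a ∈ S :=
            mem_filter.mpr ⟨hπK, hvπ, notMem_erase _ _⟩
          have heq : σ = τ.erase a := eq_of_subset_of_card_le hσπ (hmax _ hπS)
          rw [heq, insert_erase haτ]
        · have hτS : τ ∈ S := mem_filter.mpr ⟨hτ, hvτ, haτ⟩
          exact absurd (card_lt_card h) (not_lt.mpr (hmax _ hτS))
    set K' : Finset (Finset V) := (K.erase σ).erase (insert a σ) with hK'def
    have hmemK' : ∀ ρ : Finset V, ρ ∈ K' ↔ ρ ≠ insert a σ ∧ ρ ≠ σ ∧ ρ ∈ K := by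
      intro ρ; simp [hK'def, mem_erase, and_assoc]
    have hEC : ElemCollapse K K' := by
      refine ⟨σ, insert a σ, hσK, hins, ssubset_insert haσ, ?_, rfl⟩
      intro ρ hρ hsρ
      exact (hfree ρ hρ hsρ.subset).resolve_left (fun h => hsρ.ne h.symm)
    by_cases hσv : σ = {v}
    · -- terminal step: K' is exactly deleteVertex K v
      subst hσv
      have hdel : deleteVertex K v = K' := by
        ext ρ
        rw [hmemK' ρ]
        simp only [deleteVertex, mem_filter]
        constructor
        · rintro ⟨hρK, hvρ⟩
          refine ⟨fun h => hvρ (by rw [h]; exact mem_insert_of_mem (mem_singleton_self v)),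
            fun h => hvρ (by rw [h]; exact mem_singleton_self v), hρK⟩
        · rintro ⟨h1, h2, h3⟩
          refine ⟨h3, fun hvρ => ?_⟩
          rcases hfree ρ h3 (singleton_subset_iff.mpr hvρ) with h | h
          · exact h2 h
          · exact h1 h
      rw [hdel]
      exact Relation.ReflTransGen.single hEC
    · -- recursive step
      have hK'K : K' ⊆ K := (erase_subset _ _).trans (erase_subset _ _)
      have hvins : v ∈ insert a σ := mem_insert_of_mem hvσ
      have hvK' : ({v} : Finset V) ∈ K' := by
        rw [hmemK']
        refine ⟨fun h => ?_, fun h => hσv h.symm, hv⟩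
        have : a ∈ ({v} : Finset V) := by rw [h]; exact mem_insert_self a σ
        exact hav (mem_singleton.mp this)
      have hK' : IsComplex K' := by
        constructor
        · exact fun τ hτ => hK.1 τ (hK'K hτ)
        · intro ρ hρ π hπρ hπne
          have hρ' := (hmemK' ρ).mp hρ
          have hπK : π ∈ K := hK.2 ρ (hK'K hρ) π hπρ hπne
          have hσρ : ¬ σ ⊆ ρ := by
            intro hc
            rcases hfree ρ hρ'.2.2 hc with h | h
            · exact hρ'.2.1 h
            · exact hρ'.1 h
          rw [hmemK']
          refine ⟨fun h => hσρ ?_, fun h => hσρ (h ▸ hπρ), hπK⟩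
          exact (subset_insert a σ).trans (h ▸ hπρ)
      have hdom' : Dominated K' v a := by
        refine ⟨hav, ?_, ?_⟩
        · have hla := hdom.2.1
          obtain ⟨haK, hva, hvaK⟩ := mem_filter.mp hla
          refine mem_filter.mpr ⟨?_, hva, ?_⟩
          · rw [hmemK']
            refine ⟨fun h => ?_, fun h => ?_, haK⟩
            · have hv' : v ∈ ({a} : Finset V) := by rw [h]; exact hvins
              exact hav (mem_singleton.mp hv').symm
            · have hv' : v ∈ ({a} : Finset V) := by rw [h]; exact hvσ
              exact hav (mem_singleton.mp hv').symm
          · rw [hmemK']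
            refine ⟨fun h => ?_, fun h => haσ (by rw [← h]; simp), hvaK⟩
            -- insert v {a} = insert a σ would force σ = {v}
            have hσsub : σ ⊆ insert v ({a} : Finset V) := by
              rw [h]; exact subset_insert a σ
            have : σ ⊆ {v} := by
              intro x hx
              rcases mem_insert.mp (hσsub hx) with hx' | hx'
              · simp [hx']
              · exact absurd (mem_singleton.mp hx' ▸ hx) haσ
            exact hσv (Finset.subset_singleton_iff.mp this |>.resolve_left
              (Finset.nonempty_iff_ne_empty.mp ⟨v, hvσ⟩))
        · intro ρ hρ
          obtain ⟨hρK', hvρ, hvρK'⟩ := mem_filter.mp hρ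
          have hρl : ρ ∈ link K v :=
            mem_filter.mpr ⟨hK'K hρK', hvρ, hK'K hvρK'⟩
          obtain ⟨haρK, hvaρ, hvaρK⟩ := mem_filter.mp (hdom.2.2 ρ hρl)
          refine mem_filter.mpr ⟨?_, hvaρ, ?_⟩
          · rw [hmemK']
            exact ⟨fun h => hvaρ (by rw [h]; exact hvins),
              fun h => hvaρ (by rw [h]; exact hvσ), haρK⟩
          · rw [hmemK']
            refine ⟨fun h => ?_, fun h => haσ (h ▸ mem_insert_of_mem (mem_insert_self a ρ)), hvaρK⟩
            -- insert v (insert a ρ) = insert a σ forces insert v ρ = σ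
            have hmemvρ : insert v ρ ∈ K' := hvρK'
            rw [hmemK'] at hmemvρ
            by_cases haρ : a ∈ ρ
            · have : insert a ρ = ρ := insert_eq_self.mpr haρ
              rw [this] at h
              exact hmemvρ.1 h
            · have heq : insert v ρ = σ := by
                have h1 : (insert v (insert a ρ)).erase a = insert v ρ := by
                  rw [Finset.insert_comm, erase_insert]
                  simp only [mem_insert, not_or]
                  exact ⟨hav, haρ⟩
                have h2 : (insert a σ).erase a = σ := erase_insert haσ
                rw [← h1, h, h2]
              exact hmemvρ.2.1 heq
      have hdel : deleteVertex K' v = deleteVertex K v := by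
        ext ρ
        simp only [deleteVertex, mem_filter, hmemK']
        constructor
        · rintro ⟨⟨_, _, h3⟩, h4⟩; exact ⟨h3, h4⟩
        · rintro ⟨h1, h2⟩
          exact ⟨⟨fun h => h2 (by rw [h]; exact hvins),
            fun h => h2 (by rw [h]; exact hvσ), h1⟩, h2⟩
      have hlt : (K'.filter (fun τ => v ∈ τ)).card < n := by
        rw [← hn]
        apply card_lt_card
        refine ⟨filter_subset_filter _ hK'K, fun hc => ?_⟩
        have hσf : σ ∈ K.filter (fun τ => v ∈ τ) := mem_filter.mpr ⟨hσK, hvσ⟩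
        have : σ ∈ K' := (mem_filter.mp (hc hσf)).1
        rw [hmemK'] at this
        exact this.2.1 rfl
      have := IH _ hlt K' rfl hK' hvK' hdom'
      rw [hdel] at this
      exact Relation.ReflTransGen.head hEC this

/-- If `v` is a dominated vertex of `K`, then `K` collapses to `K ∖ v` in the sense of
Whitehead: there is a sequence of elementary collapses from `K` to `K ∖ v`. -/
theorem dominated_collapses [DecidableEq V] (K : Finset (Finset V))
    (hK : IsComplex K) (v a : V) (hv : ({v} : Finset V) ∈ K)
    (hdom : Dominated K v a) :
    Relation.ReflTransGen (ElemCollapse (V := V)) K (deleteVertex K v) :=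
  collapse_aux v a _ K rfl hK hv hdom
end

section
/- Let M be an acyclic matching on the face poset X(K) of a finite simplicial complex K, with matched pairs consisting of simplices of consecutive dimension. Then the relation on the quotient set X(K)/∼ (where σ ∼ τ if {σ,τ} ∈ M) generated by the face order descends to a partial order if and only if the matching M is acyclic in Chari's sense (no directed cycle alternating between matched upward edges and unmatched downward edges in the modified Hasse diagram). -/
open Finset

variable {V : Type*}

/-- `σ` and `τ` are matched by `M` (in either order). -/
def MatchedIn (M : Set (Finset V × Finset V)) (σ τ : Finset V) : Prop :=
  (σ, τ) ∈ M ∨ (τ, σ) ∈ M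

/-- The relation on simplices generated by the face order together with the matching
identifications; it induces the candidate order on the quotient `X(K)/∼`. -/
def QuotLe (K : Finset (Finset V)) (M : Set (Finset V × Finset V))
    (σ τ : Finset V) : Prop :=
  Relation.ReflTransGen (fun x y => x ∈ K ∧ y ∈ K ∧ (x ⊆ y ∨ MatchedIn M x y)) σ τ

/-- One step of the modified Hasse diagram: cover relations oriented downward, except
matched pairs, which are oriented upward. -/
def HasseStep (K : Finset (Finset V)) (M : Set (Finset V × Finset V))
    (σ τ : Finset V) : Prop :=
  σ ∈ K ∧ τ ∈ K ∧
    ((τ ⊆ σ ∧ σ.card = τ.card + 1 ∧ (τ, σ) ∉ M) ∨ (σ, τ) ∈ M)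

set_option linter.unusedSectionVars false

section Aux

variable [DecidableEq V] {K : Finset (Finset V)} {M : Set (Finset V × Finset V)}

/-- A step of the chain relation generating `QuotLe`, refined to covers:
either a "good" step (the reverse of a step of the modified Hasse diagram) or a
"bad" step (ascending through a matched pair). -/
def CStep (K : Finset (Finset V)) (M : Set (Finset V × Finset V)) (x y : Finset V) : Prop :=
  HasseStep K M y x ∨ (x, y) ∈ M

private lemma not_self_mem (hM₁ : ∀ p ∈ M, p.1 ∈ K ∧ p.2 ∈ K ∧ p.1 ⊆ p.2 ∧ p.2.card = p.1.card + 1)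
    (a : Finset V) : (a, a) ∉ M := by
  intro h
  have h2 : a.card = a.card + 1 := (hM₁ _ h).2.2.2
  omega

/-- Any inclusion in `K` decomposes into a chain of `CStep`s. -/
private lemma subset_cstep_chain (hK : IsComplex K) (n : ℕ) :
    ∀ x y : Finset V, x ∈ K → y ∈ K → x ⊆ y → y.card ≤ x.card + n →
      Relation.ReflTransGen (CStep K M) x y := by
  induction n with
  | zero =>
    intro x y _ _ hsub hcard
    have : x = y := Finset.eq_of_subset_of_card_le hsub (by omega)
    subst this; exact .refl
  | succ n ih =>
    intro x y hx hy hsub hcard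
    by_cases hxy : x = y
    · subst hxy; exact .refl
    · have hns : ¬ y ⊆ x := fun h => hxy (Finset.Subset.antisymm hsub h)
      obtain ⟨v, hvy, hvx⟩ := Finset.not_subset.mp hns
      set e := insert v x with he
      have hxe : x ⊆ e := Finset.subset_insert _ _
      have hey : e ⊆ y := Finset.insert_subset hvy hsub
      have heK : e ∈ K := hK.2 y hy e hey (Finset.insert_nonempty _ _)
      have hcarde : e.card = x.card + 1 := Finset.card_insert_of_notMem hvx
      have hstep : CStep K M x e := by
        by_cases hm : (x, e) ∈ M
        · exact Or.inr hm
        · exact Or.inl ⟨heK, hx, Or.inl ⟨hxe, by omega, hm⟩⟩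
      exact Relation.ReflTransGen.head hstep (ih e y heK hy hey (by omega))

/-- `QuotLe` chains refine to `CStep` chains. -/
private lemma quotLe_to_cstep (hK : IsComplex K) {x y : Finset V}
    (h : QuotLe K M x y) : Relation.ReflTransGen (CStep K M) x y := by
  induction h with
  | refl => exact .refl
  | tail hpre hstep ih =>
    rename_i b c
    obtain ⟨hb, hc, hrel⟩ := hstep
    rcases hrel with hsub | hm | hm
    · exact ih.trans (subset_cstep_chain hK c.card b c hb hc hsub (by omega))
    · exact ih.trans (Relation.ReflTransGen.single (Or.inr hm))
    · exact ih.trans (Relation.ReflTransGen.single (Or.inl ⟨hc, hb, Or.inr hm⟩))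

/-- The key rewriting lemma: a `CStep` chain, possibly preceded by a pending bad
(matched-ascent) step, can be put in the canonical form "reverse Hasse path, followed
by at most one bad step". -/
private lemma pushBad (hK : IsComplex K)
    (hM₁ : ∀ p ∈ M, p.1 ∈ K ∧ p.2 ∈ K ∧ p.1 ⊆ p.2 ∧ p.2.card = p.1.card + 1)
    (hM₂ : ∀ p ∈ M, ∀ q ∈ M,
      (p.1 = q.1 ∨ p.1 = q.2 ∨ p.2 = q.1 ∨ p.2 = q.2) → p = q)
    {d y : Finset V} (h : Relation.ReflTransGen (CStep K M) d y) :
    ∀ c : Finset V, ((c, d) ∈ M ∨ c = d) →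
      ∃ z, Relation.ReflTransGen (Function.swap (HasseStep K M)) c z ∧
        (z = y ∨ (z, y) ∈ M) := by
  induction h using Relation.ReflTransGen.head_induction_on with
  | refl => exact fun c hc => ⟨c, .refl, hc.symm⟩
  | head hstep hchain ih =>
    rename_i a a'
    intro c hc
    rcases hstep with hH | hB
    · -- good step from a to a' (i.e. HasseStep a' a)
      rcases hc with hcd | rfl
      · obtain ⟨ha'K, haK, hcase⟩ := hH
        rcases hcase with ⟨hsub, hcard, hnm⟩ | hm
        · -- ascent a ⊆ a' unmatched; reroute the bad step (c,a) ∈ M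
          obtain ⟨hcK', -, hcsub', hacard'⟩ := hM₁ _ hcd
          have hcK : c ∈ K := hcK'
          have hcsub : c ⊆ a := hcsub'
          have hacard : a.card = c.card + 1 := hacard'
          have hns : ¬ a' ⊆ a := fun hsb => by
            have := Finset.card_le_card hsb; omega
          obtain ⟨v, hva', hva⟩ := Finset.not_subset.mp hns
          have hvc : v ∉ c := fun hvc => hva (hcsub hvc)
          set e := insert v c with he
          have hce : c ⊆ e := Finset.subset_insert _ _
          have hea' : e ⊆ a' := Finset.insert_subset hva' (hcsub.trans hsub)
          have heK : e ∈ K := hK.2 a' ha'K e hea' (Finset.insert_nonempty _ _)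
          have hecard : e.card = c.card + 1 := Finset.card_insert_of_notMem hvc
          have hea : e ≠ a := fun h => hva (h ▸ Finset.mem_insert_self v c)
          have hcem : (c, e) ∉ M := by
            intro hmem
            have := hM₂ (c, a) hcd (c, e) hmem (Or.inl rfl)
            exact hea (congrArg Prod.snd this).symm
          have hGce : Function.swap (HasseStep K M) c e :=
            ⟨heK, hcK, Or.inl ⟨hce, by omega, hcem⟩⟩
          by_cases hm' : (e, a') ∈ M
          · obtain ⟨z, hz1, hz2⟩ := ih e (Or.inl hm')
            exact ⟨z, Relation.ReflTransGen.head hGce hz1, hz2⟩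
          · have hGea' : Function.swap (HasseStep K M) e a' :=
              ⟨ha'K, heK, Or.inl ⟨hea', by omega, hm'⟩⟩
            obtain ⟨z, hz1, hz2⟩ := ih a' (Or.inr rfl)
            exact ⟨z, Relation.ReflTransGen.head hGce
              (Relation.ReflTransGen.head hGea' hz1), hz2⟩
        · -- matched descent (a',a) ∈ M : cancels against the pending bad step
          have heq := hM₂ (a', a) hm (c, a) hcd (Or.inr (Or.inr (Or.inr rfl)))
          have ha'c : a' = c := congrArg Prod.fst heq
          obtain ⟨z, hz1, hz2⟩ := ih a' (Or.inr rfl)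
          exact ⟨z, ha'c ▸ hz1, hz2⟩
      · -- no pending bad step: just record the good step
        obtain ⟨z, hz1, hz2⟩ := ih a' (Or.inr rfl)
        exact ⟨z, Relation.ReflTransGen.head hH hz1, hz2⟩
    · -- bad step (a, a') ∈ M
      rcases hc with hcd | rfl
      · -- two consecutive bad steps: impossible
        have heq := hM₂ (c, a) hcd (a, a') hB (Or.inr (Or.inr (Or.inl rfl)))
        have hca : c = a := congrArg Prod.fst heq
        exact absurd (hca ▸ hcd) (not_self_mem hM₁ a)
      · exact ih _ (Or.inl hB)

private lemma rtg_ne_transGen {α : Type*} {r : α → α → Prop} {a b : α}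
    (h : Relation.ReflTransGen r a b) (hne : a ≠ b) : Relation.TransGen r a b := by
  rcases Relation.ReflTransGen.cases_head h with rfl | ⟨c, hc, hcb⟩
  · exact absurd rfl hne
  · exact Relation.TransGen.head' hc hcb

private lemma good_to_cstep {x y : Finset V}
    (h : Relation.ReflTransGen (Function.swap (HasseStep K M)) x y) :
    Relation.ReflTransGen (CStep K M) x y :=
  Relation.ReflTransGen.mono (p := CStep K M) (fun _ _ hs => Or.inl hs) _ _ h

/-- Hard direction: failure of antisymmetry produces a directed Hasse cycle. -/
private lemma cycle_of_not_antisym (hK : IsComplex K)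
    (hM₁ : ∀ p ∈ M, p.1 ∈ K ∧ p.2 ∈ K ∧ p.1 ⊆ p.2 ∧ p.2.card = p.1.card + 1)
    (hM₂ : ∀ p ∈ M, ∀ q ∈ M,
      (p.1 = q.1 ∨ p.1 = q.2 ∨ p.2 = q.1 ∨ p.2 = q.2) → p = q)
    {σ τ : Finset V} (hσ : σ ∈ K)
    (h1 : QuotLe K M σ τ) (h2 : QuotLe K M τ σ)
    (hne : σ ≠ τ) (hnm : ¬ MatchedIn M σ τ) :
    ∃ ρ ∈ K, Relation.TransGen (HasseStep K M) ρ ρ := by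
  have c1 := quotLe_to_cstep hK h1
  have c2 := quotLe_to_cstep hK h2
  obtain ⟨m', hgm', hm'⟩ := pushBad hK hM₁ hM₂ c1 σ (Or.inr rfl)
  obtain ⟨z, hgz, hz⟩ := pushBad hK hM₁ hM₂ c2 m' hm'.symm
  rcases hz with heqz | hzσ
  · -- closed good chain through m'; m' ≠ σ
    have hmσ : σ ≠ m' := by
      rintro rfl
      rcases hm' with heq | hm
      · exact hne heq
      · exact hnm (Or.inl hm)
    have htg : Relation.TransGen (Function.swap (HasseStep K M)) σ σ :=
      (rtg_ne_transGen hgm' hmσ).trans_left (heqz ▸ hgz)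
    exact ⟨σ, hσ, Relation.transGen_swap.mp htg⟩
  · -- a remaining bad step (z, σ) ∈ M : push it around once more
    obtain ⟨w, hgw, hw⟩ := pushBad hK hM₁ hM₂ (good_to_cstep hgm') z (Or.inl hzσ)
    obtain ⟨u, hgu, hu⟩ := pushBad hK hM₁ hM₂ (good_to_cstep hgz) w hw.symm
    rcases hu with hequ | huz
    · -- closed good chain through w at z
      have hwz : z ≠ w := by
        rintro rfl
        rcases hw with heq | hzm
        · subst heq
          rcases hm' with heq2 | hmt
          · exact hnm (Or.inr (heq2 ▸ hzσ))
          · have := hM₂ (z, σ) hzσ (z, τ) hmt (Or.inl rfl)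
            exact hne (congrArg Prod.snd this)
        · have := hM₂ (z, σ) hzσ (z, m') hzm (Or.inl rfl)
          have hm'σ : m' = σ := (congrArg Prod.snd this).symm
          rcases hm' with heq | hmt
          · exact hne (hm'σ.symm.trans heq)
          · exact hnm (Or.inl (hm'σ ▸ hmt))
      have htg : Relation.TransGen (Function.swap (HasseStep K M)) z z :=
        (rtg_ne_transGen hgw hwz).trans_left (hequ ▸ hgu)
      exact ⟨z, (hM₁ _ hzσ).1, Relation.transGen_swap.mp htg⟩
    · -- (u, z) ∈ M and (z, σ) ∈ M : impossible
      have heq := hM₂ (u, z) huz (z, σ) hzσ (Or.inr (Or.inr (Or.inl rfl)))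
      have huz' : u = z := congrArg Prod.fst heq
      exact absurd (huz' ▸ huz) (not_self_mem hM₁ z)

/-- Any step of the modified Hasse diagram yields a `QuotLe` relation downwards. -/
private lemma hasse_to_quotLe {x y : Finset V} (h : HasseStep K M x y) :
    QuotLe K M y x := by
  obtain ⟨hx, hy, hcase⟩ := h
  rcases hcase with ⟨hsub, -, -⟩ | hm
  · exact Relation.ReflTransGen.single ⟨hy, hx, Or.inl hsub⟩
  · exact Relation.ReflTransGen.single ⟨hy, hx, Or.inr (Or.inr hm)⟩

private lemma rtg_hasse_to_quotLe {x y : Finset V}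
    (h : Relation.ReflTransGen (HasseStep K M) x y) : QuotLe K M y x := by
  induction h with
  | refl => exact .refl
  | tail _ hstep ih => exact Relation.ReflTransGen.trans (hasse_to_quotLe hstep) ih

/-- Any directed Hasse path either contains a matched (upward) edge or strictly
decreases cardinality. -/
private lemma find_matched {x y : Finset V}
    (h : Relation.TransGen (HasseStep K M) x y) :
    (∃ a b, Relation.ReflTransGen (HasseStep K M) x a ∧ (a, b) ∈ M ∧
      Relation.ReflTransGen (HasseStep K M) b y) ∨ y.card < x.card := by
  induction h with
  | single hstep =>
    rcases hstep with ⟨_, _, ⟨_, hcard, _⟩ | hm⟩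
    · right; omega
    · exact Or.inl ⟨x, _, .refl, hm, .refl⟩
  | tail hpre hstep ih =>
    rename_i b' y'
    rcases ih with ⟨a, b, h1, h2, h3⟩ | hc
    · exact Or.inl ⟨a, b, h1, h2, h3.tail hstep⟩
    · rcases hstep with ⟨_, _, ⟨_, hcard, _⟩ | hm⟩
      · right; omega
      · exact Or.inl ⟨b', y', hpre.to_reflTransGen, hm, .refl⟩

end Aux


/-- The relation induced on the quotient `X(K)/∼` by the face order is a partial order
(i.e. it is antisymmetric up to the matching identification) if and only if the
matching is acyclic in Chari's sense: the modified Hasse diagram has no directed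
cycle. -/
theorem quotient_partial_order_iff_acyclic [DecidableEq V]
    (K : Finset (Finset V)) (hK : IsComplex K)
    (M : Set (Finset V × Finset V))
    (hM₁ : ∀ p ∈ M, p.1 ∈ K ∧ p.2 ∈ K ∧ p.1 ⊆ p.2 ∧ p.2.card = p.1.card + 1)
    (hM₂ : ∀ p ∈ M, ∀ q ∈ M,
      (p.1 = q.1 ∨ p.1 = q.2 ∨ p.2 = q.1 ∨ p.2 = q.2) → p = q) :
    ((∀ σ ∈ K, ∀ τ ∈ K, QuotLe K M σ τ → QuotLe K M τ σ →
        (σ = τ ∨ MatchedIn M σ τ)) ↔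
      ¬ ∃ σ ∈ K, Relation.TransGen (HasseStep K M) σ σ) := by
  constructor
  · -- antisymmetry ⇒ no directed Hasse cycle
    rintro hA ⟨σ, hσ, hcyc⟩
    rcases find_matched hcyc with ⟨a, b, h1, hab, h2⟩ | hlt
    · -- there is a matched edge a → b on the cycle; find the next step b → c
      obtain ⟨haK, hbK, -, -⟩ := hM₁ _ hab
      have htg : Relation.TransGen (HasseStep K M) b a :=
        (Relation.TransGen.trans_right h2 hcyc).trans_left h1
      obtain ⟨c, hbc, hca⟩ := Relation.TransGen.head'_iff.mp htg
      have hcK : c ∈ K := hbc.2.1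
      have hQac : QuotLe K M a c := rtg_hasse_to_quotLe hca
      have hQca : QuotLe K M c a := by
        have hHab : HasseStep K M a b := ⟨haK, hbK, Or.inr hab⟩
        exact rtg_hasse_to_quotLe
          (Relation.ReflTransGen.head hHab (Relation.ReflTransGen.single hbc))
      rcases hA a haK c hcK hQac hQca with rfl | hmac
      · -- a = c : the step b → a contradicts the matched edge a → b
        rcases hbc with ⟨-, -, ⟨-, -, hnm⟩ | hm⟩
        · exact hnm hab
        · have heq := hM₂ (a, b) hab (b, a) hm (Or.inr (Or.inl rfl))
          have : a = b := congrArg Prod.fst heq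
          exact not_self_mem hM₁ a (this ▸ hab)
      · rcases hmac with hm | hm
        · have heq := hM₂ (a, b) hab (a, c) hm (Or.inl rfl)
          have hbceq : b = c := congrArg Prod.snd heq
          subst hbceq
          rcases hbc with ⟨-, -, ⟨-, hcard, -⟩ | hm'⟩
          · omega
          · exact not_self_mem hM₁ b hm'
        · have heq := hM₂ (a, b) hab (c, a) hm (Or.inr (Or.inl rfl))
          have : a = b := (congrArg Prod.snd heq).symm
          exact not_self_mem hM₁ a (this ▸ hab)
    · omega
  · -- no cycle ⇒ antisymmetry
    intro hNC σ hσ τ hτ h1 h2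
    by_contra hcon
    push_neg at hcon
    exact hNC (cycle_of_not_antisym hK hM₁ hM₂ hσ h1 h2 hcon.1 hcon.2)
end

section
/- Let K be a finite simplicial complex, g : V(K) → ℝ a function, and let v be a vertex dominated in K by a vertex a with g(a) < g(v). For each simplex σ ∈ st(v,K) with a ∉ σ, the pair (σ, σ∪{a}) defines a perfect pairing on the set of simplices of K containing v, i.e., the map σ ↦ σ∪{a} is a bijection between {σ ∈ K : v ∈ σ, a ∉ σ} and {τ ∈ K : v ∈ τ, a ∈ τ}. -/
open Finset

variable {V : Type*}

/-- If `v` is dominated by `a` (with `g a < g v`), then `σ ↦ σ ∪ {a}` is a bijection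
between the simplices of `K` containing `v` but not `a` and those containing both
`v` and `a`. -/
theorem star_pairing_bijective [DecidableEq V] (K : Finset (Finset V))
    (hK : IsComplex K) (g : V → ℝ) (v a : V) (hga : g a < g v)
    (hdom : Dominated K v a) :
    Set.BijOn (fun σ => insert a σ)
      {σ : Finset V | σ ∈ K ∧ v ∈ σ ∧ a ∉ σ}
      {τ : Finset V | τ ∈ K ∧ v ∈ τ ∧ a ∈ τ} := by
  obtain ⟨hav, ha1, hcone⟩ := hdom
  have key : ∀ σ ∈ K, v ∈ σ → insert a σ ∈ K := by
    intro σ hσ hvσ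
    by_cases haσ : a ∈ σ
    · rwa [Finset.insert_eq_self.2 haσ]
    rcases eq_or_ne σ {v} with rfl | hne
    · have := (Finset.mem_filter.1 ha1).2.2
      have : insert v {a} ∈ K := this
      have h : insert a ({v} : Finset V) = insert v {a} := by
        ext x; simp [or_comm]
      rwa [h]
    · have hσ' : σ.erase v ∈ link K v := by
        refine Finset.mem_filter.2 ⟨hK.2 σ hσ _ (Finset.erase_subset _ _) ?_, Finset.notMem_erase _ _, by rwa [Finset.insert_erase hvσ]⟩
        rw [Finset.nonempty_iff_ne_empty]
        intro h
        apply hne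
        have := Finset.insert_erase hvσ
        rw [h] at this
        simpa using this.symm
      have := hcone _ hσ'
      have h2 := (Finset.mem_filter.1 this).2.2
      have h : insert v (insert a (σ.erase v)) = insert a σ := by
        rw [Finset.insert_comm, Finset.insert_erase hvσ]
      rwa [h] at h2
  refine ⟨?_, ?_, ?_⟩
  · rintro σ ⟨hσ, hv, ha⟩
    exact ⟨key σ hσ hv, Finset.mem_insert_of_mem hv, Finset.mem_insert_self _ _⟩
  · rintro σ ⟨hσ, hv, ha⟩ σ' ⟨hσ', hv', ha'⟩ h
    have := congrArg (Finset.erase · a) h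
    simpa [Finset.erase_insert_of_ne, Finset.erase_insert, ha, ha'] using this
  · rintro τ ⟨hτ, hv, ha⟩
    refine ⟨τ.erase a, ⟨hK.2 τ hτ _ (Finset.erase_subset _ _) ⟨v, Finset.mem_erase.2 ⟨fun h => hav h.symm, hv⟩⟩, Finset.mem_erase.2 ⟨fun h => hav h.symm, hv⟩, Finset.notMem_erase _ _⟩, Finset.insert_erase ha⟩
end

section
/- Let K be a finite simplicial complex whose vertex set admits an ordering v₁,…,v_n such that for each i ≥ 2, the vertex v_i is dominated in the full subcomplex spanned by {v₁,…,v_i} by some v_j with j < i. Then K collapses (in the Whitehead sense) to the vertex v₁; in particular K is collapsible and contractible. -/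
open Finset

variable {V : Type*}

-- apex cone lemma
lemma insert_apex_mem_s19 [DecidableEq V] {L : Finset (Finset V)} (hL : IsComplex L) {v a : V}
    (hd : Dominated L v a) {σ : Finset V} (hσ : σ ∈ L) (hv : v ∈ σ) (ha : a ∉ σ) :
    insert a σ ∈ L := by
  obtain ⟨hav, hla, hcone⟩ := hd
  by_cases hne : (σ.erase v).Nonempty
  · have h1 : σ.erase v ∈ L := hL.2 σ hσ _ (erase_subset _ _) hne
    have h2 : σ.erase v ∈ link L v := by
      simp only [link, mem_filter]
      exact ⟨h1, notMem_erase _ _, by rw [insert_erase hv]; exact hσ⟩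
    have h3 := hcone _ h2
    simp only [link, mem_filter] at h3
    have key : insert a σ = insert v (insert a (σ.erase v)) := by
      ext x
      simp only [mem_insert, mem_erase]
      rcases eq_or_ne x v with rfl | hxv
      · simp [hv]
      · tauto
    rw [key]; exact h3.2.2
  · have hs : σ = {v} := by
      rw [not_nonempty_iff_eq_empty] at hne
      ext x
      simp only [mem_singleton]
      constructor
      · intro hx
        by_contra hxv
        have : x ∈ σ.erase v := mem_erase.2 ⟨hxv, hx⟩
        simp [hne] at this
      · rintro rfl; exact hv
    subst hs
    simp only [link, mem_filter] at hla
    have : insert a ({v} : Finset V) = insert v ({a} : Finset V) := by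
      ext x; simp [mem_insert]; tauto
    rw [this]; exact hla.2.2

/-- The complex `L` with the pairs `(τ, insert a τ)` for `τ ∈ S \ S'` removed. -/
noncomputable def Mset [DecidableEq V] (L : Finset (Finset V)) (v a : V) (S' : Finset (Finset V)) :
    Finset (Finset V) := by
  classical
  exact L.filter (fun ρ => v ∈ ρ → if a ∈ ρ then ρ.erase a ∈ S' else ρ ∈ S')

lemma mem_Mset [DecidableEq V] {L : Finset (Finset V)} {v a : V} {S' : Finset (Finset V)} {ρ : Finset V} :
    ρ ∈ Mset L v a S' ↔ ρ ∈ L ∧ (v ∈ ρ → if a ∈ ρ then ρ.erase a ∈ S' else ρ ∈ S') := by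
  classical
  simp [Mset]

lemma collapse_dominated [DecidableEq V] {L : Finset (Finset V)} (hL : IsComplex L) {v a : V}
    (hd : Dominated L v a) :
    Relation.ReflTransGen (ElemCollapse (V := V)) L (deleteVertex L v) := by
  classical
  have hav : a ≠ v := hd.1
  set S : Finset (Finset V) := L.filter (fun σ => v ∈ σ ∧ a ∉ σ) with hS
  have hMS : Mset L v a S = L := by
    ext ρ
    rw [mem_Mset]
    constructor
    · exact fun h => h.1
    · intro hρ
      refine ⟨hρ, fun hv => ?_⟩
      split
      next hain =>
        have h1 : ρ.erase a ∈ L := hL.2 ρ hρ _ (erase_subset _ _)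
          ⟨v, mem_erase.2 ⟨Ne.symm hav, hv⟩⟩
        simp only [hS, mem_filter]
        exact ⟨h1, mem_erase.2 ⟨Ne.symm hav, hv⟩, notMem_erase _ _⟩
      next hain =>
        simp only [hS, mem_filter]
        exact ⟨hρ, hv, hain⟩
  have hM0 : Mset L v a ∅ = deleteVertex L v := by
    ext ρ
    rw [mem_Mset]
    simp only [deleteVertex, mem_filter]
    constructor
    · rintro ⟨h1, h2⟩
      refine ⟨h1, fun hv => ?_⟩
      have := h2 hv
      split at this <;> simp at this
    · rintro ⟨h1, h2⟩
      exact ⟨h1, fun hv => absurd hv h2⟩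
  -- main induction
  have main : ∀ (k : ℕ) (S' : Finset (Finset V)), S'.card = k → S' ⊆ S →
      Relation.ReflTransGen (ElemCollapse (V := V)) (Mset L v a S') (deleteVertex L v) := by
    intro k
    induction k with
    | zero =>
      intro S' hc _
      rw [card_eq_zero] at hc
      subst hc
      rw [hM0]
    | succ k ih =>
      intro S' hc hsub
      have hne : S'.Nonempty := by
        rw [← card_pos, hc]; omega
      obtain ⟨σ, hσS', hmax⟩ := S'.exists_max_image (fun τ => τ.card) hne
      have hσS : σ ∈ S := hsub hσS'
      simp only [hS, mem_filter] at hσS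
      obtain ⟨hσL, hvσ, haσ⟩ := hσS
      have hconeL : insert a σ ∈ L := insert_apex_mem_s19 hL hd hσL hvσ haσ
      have hsub2 : S'.erase σ ⊆ S := (erase_subset _ _).trans hsub
      have hcard2 : (S'.erase σ).card = k := by
        rw [card_erase_of_mem hσS', hc]; omega
      refine Relation.ReflTransGen.head ?_ (ih _ hcard2 hsub2)
      refine ⟨σ, insert a σ, ?_, ?_, ?_, ?_, ?_⟩
      · rw [mem_Mset]
        refine ⟨hσL, fun _ => ?_⟩
        simp [haσ, hσS']
      · rw [mem_Mset]
        refine ⟨hconeL, fun _ => ?_⟩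
        simp [mem_insert, erase_insert haσ, hσS']
      · exact ssubset_insert haσ
      · intro ρ hρ hσρ
        rw [mem_Mset] at hρ
        obtain ⟨hρL, hρc⟩ := hρ
        have hvρ : v ∈ ρ := hσρ.1 hvσ
        have := hρc hvρ
        by_cases haρ : a ∈ ρ
        · rw [if_pos haρ] at this
          have hsube : σ ⊆ ρ.erase a := fun x hx =>
            mem_erase.2 ⟨fun h => haσ (h ▸ hx), hσρ.1 hx⟩
          rcases eq_or_ne σ (ρ.erase a) with heq | hne2
          · rw [heq, insert_erase haρ]
          · have hss : σ ⊂ ρ.erase a := ssubset_of_subset_of_ne hsube hne2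
            have := hmax _ this
            have := card_lt_card hss
            omega
        · rw [if_neg haρ] at this
          have := hmax _ this
          have := card_lt_card hσρ
          omega
      · ext ρ
        rw [mem_erase, mem_erase, mem_Mset, mem_Mset]
        constructor
        · rintro ⟨hρL, hρc⟩
          by_cases hvρ : v ∈ ρ
          · have := hρc hvρ
            by_cases haρ : a ∈ ρ
            · rw [if_pos haρ] at this
              have h1 : ρ.erase a ∈ S' := mem_of_mem_erase this
              have h2 : ρ.erase a ≠ σ := (mem_erase.1 this).1
              refine ⟨?_, ?_, hρL, fun _ => ?_⟩
              · intro heq; subst heq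
                exact h2 (by rw [erase_insert haσ])
              · intro heq; subst heq; exact haσ haρ
              · rw [if_pos haρ]; exact h1
            · rw [if_neg haρ] at this
              refine ⟨fun heq => haρ (heq ▸ mem_insert_self a σ), (mem_erase.1 this).1,
                hρL, fun _ => ?_⟩
              rw [if_neg haρ]; exact mem_of_mem_erase this
          · exact ⟨fun heq => hvρ (heq ▸ mem_insert_of_mem hvσ),
              fun heq => hvρ (heq ▸ hvσ), hρL, fun h => absurd h hvρ⟩
        · rintro ⟨hne1, hne2, hρL, hρc⟩
          refine ⟨hρL, fun hvρ => ?_⟩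
          have := hρc hvρ
          by_cases haρ : a ∈ ρ
          · rw [if_pos haρ] at this ⊢
            refine mem_erase.2 ⟨fun heq => hne1 ?_, this⟩
            rw [← heq, insert_erase haρ]
          · rw [if_neg haρ] at this ⊢
            exact mem_erase.2 ⟨hne2, this⟩
  have := main S.card S rfl (Finset.Subset.refl S)
  rwa [hMS] at this
/-- If the vertices of `K` admit an ordering `vs 0, …, vs (n-1)` such that each `vs i`
with `i ≥ 1` is dominated, in the full subcomplex spanned by `{vs 0, …, vs i}`, by some
earlier vertex `vs j` (`j < i`), then `K` collapses in the Whitehead sense to the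
vertex `vs 0`; in particular `K` is collapsible. -/
theorem dominated_ordering_implies_collapsible [Fintype V] [DecidableEq V]
    (K : Finset (Finset V)) (hK : IsComplex K)
    (n : ℕ) (hn : 0 < n) (vs : Fin n → V) (hinj : Function.Injective vs)
    (hvert : ∀ v : V, ({v} : Finset V) ∈ K ↔ ∃ i, vs i = v)
    (hdom : ∀ i : Fin n, 0 < (i : ℕ) → ∃ j : Fin n, j < i ∧
      Dominated (K.filter (fun σ => ∀ w ∈ σ, ∃ k : Fin n, k ≤ i ∧ vs k = w))
        (vs i) (vs j)) :
    Relation.ReflTransGen (ElemCollapse (V := V)) K {({vs ⟨0, hn⟩} : Finset V)} := by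
  classical
  set Kc : ℕ → Finset (Finset V) :=
    fun m => K.filter (fun σ => ∀ w ∈ σ, ∃ k : Fin n, (k : ℕ) ≤ m ∧ vs k = w) with hKc
  have hKcComplex : ∀ m, IsComplex (Kc m) := by
    intro m
    constructor
    · intro σ hσ
      exact hK.1 σ (mem_filter.1 hσ).1
    · intro σ hσ τ hτσ hτne
      rw [hKc, mem_filter] at hσ ⊢
      exact ⟨hK.2 σ hσ.1 τ hτσ hτne, fun w hw => hσ.2 w (hτσ hw)⟩
  -- the top level equals K
  have htop : Kc (n - 1) = K := by
    ext σ
    rw [hKc, mem_filter]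
    constructor
    · exact fun h => h.1
    · intro hσ
      refine ⟨hσ, fun w hw => ?_⟩
      have h1 : ({w} : Finset V) ∈ K :=
        hK.2 σ hσ {w} (singleton_subset_iff.2 hw) (singleton_nonempty w)
      obtain ⟨i, hi⟩ := (hvert w).1 h1
      exact ⟨i, by omega, hi⟩
  -- the bottom level is the single vertex
  have hbot : Kc 0 = {({vs ⟨0, hn⟩} : Finset V)} := by
    ext σ
    rw [hKc, mem_filter, mem_singleton]
    constructor
    · rintro ⟨hσK, hσw⟩
      have hne := hK.1 σ hσK
      ext x
      rw [mem_singleton]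
      constructor
      · intro hx
        obtain ⟨k, hk0, hkx⟩ := hσw x hx
        have : k = ⟨0, hn⟩ := by
          apply Fin.ext; simpa using hk0
        rw [← hkx, this]
      · intro hx
        obtain ⟨y, hy⟩ := hne
        obtain ⟨k, hk0, hky⟩ := hσw y hy
        have : k = ⟨0, hn⟩ := by
          apply Fin.ext; simpa using hk0
        rw [this] at hky
        rw [hx, hky]; exact hy
    · rintro rfl
      refine ⟨(hvert _).2 ⟨⟨0, hn⟩, rfl⟩, fun w hw => ⟨⟨0, hn⟩, le_refl _, ?_⟩⟩
      rw [mem_singleton] at hw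
      rw [hw]
  -- each step collapses Kc (m+1) down to Kc m
  have hstep : ∀ m : ℕ, m + 1 < n →
      Relation.ReflTransGen (ElemCollapse (V := V)) (Kc (m + 1)) (Kc m) := by
    intro m hm
    set i : Fin n := ⟨m + 1, hm⟩ with hi
    obtain ⟨j, _, hjdom⟩ := hdom i (by simp [hi])
    have hfilter_eq : K.filter (fun σ => ∀ w ∈ σ, ∃ k : Fin n, k ≤ i ∧ vs k = w)
        = Kc (m + 1) := by
      rw [hKc]
      apply filter_congr
      intro σ _
      simp only [Fin.le_def, hi]
    rw [hfilter_eq] at hjdom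
    have hcol := collapse_dominated (hKcComplex (m + 1)) hjdom
    have hdel : deleteVertex (Kc (m + 1)) (vs i) = Kc m := by
      ext σ
      rw [deleteVertex, mem_filter, hKc, mem_filter, mem_filter]
      constructor
      · rintro ⟨⟨hσK, hσw⟩, hvi⟩
        refine ⟨hσK, fun w hw => ?_⟩
        obtain ⟨k, hk, hkw⟩ := hσw w hw
        refine ⟨k, ?_, hkw⟩
        rcases Nat.lt_or_ge (k : ℕ) (m + 1) with h | h
        · omega
        · exfalso
          have : k = i := by apply Fin.ext; simp [hi]; omega
          rw [this] at hkw
          exact hvi (hkw ▸ hw)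
      · rintro ⟨hσK, hσw⟩
        refine ⟨⟨hσK, fun w hw => ?_⟩, fun hvi => ?_⟩
        · obtain ⟨k, hk, hkw⟩ := hσw w hw
          exact ⟨k, by omega, hkw⟩
        · obtain ⟨k, hk, hkw⟩ := hσw (vs i) hvi
          have : k = i := hinj hkw
          rw [this] at hk
          simp [hi] at hk
      
    rw [hdel] at hcol
    exact hcol
  -- descend from n-1 to 0
  have hdesc : ∀ m : ℕ, m < n →
      Relation.ReflTransGen (ElemCollapse (V := V)) (Kc m) (Kc 0) := by
    intro m
    induction m with
    | zero => intro _; rfl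
    | succ m ih =>
      intro hm
      exact (hstep m hm).trans (ih (by omega))
  have := hdesc (n - 1) (by omega)
  rw [htop, hbot] at this
  exact this
end
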